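/- arXiv:2512.10112 — 10 statements merged into one kernel-verified Lean document; each statement's English description precedes it below -/
import Mathlib

section
/- Let φ and ψ be two strategy-proof mechanisms on the same environment, and let i be an agent whose preference domain is top-rich. Then the following are equivalent: (1) for all profiles R, φ(R) is weakly R_i-preferred to ψ(R); (2) for all opposing profiles R_{-i}, the menu of i under ψ is a subset of the menu of i under φ (where menus are taken as sets of i-equivalence classes of outcomes). -/
section

variable {ι A : Type*} [DecidableEq ι] {𝓡 : ι → Type*}

/-- Strategy-proofness of a direct mechanism. -/
def StrategyProof (pr : ∀ i, 𝓡 i → A → A → Prop) (φ : (∀ i, 𝓡 i) → A) : Prop :=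
  ∀ (R : ∀ i, 𝓡 i) (i : ι) (r' : 𝓡 i), pr i (R i) (φ R) (φ (Function.update R i r'))

/-- Two outcomes are `i`-equivalent if `i` is indifferent between them at every
admissible preference. -/
def EquivFor (pr : ∀ i, 𝓡 i → A → A → Prop) (i : ι) (a b : A) : Prop :=
  ∀ r : 𝓡 i, pr i r a b ∧ pr i r b a

/-- `i`'s domain is top-rich: every `i`-equivalence class can be made uniquely
top-ranked. -/
def TopRich (pr : ∀ i, 𝓡 i → A → A → Prop) (i : ι) : Prop :=
  ∀ a : A, ∃ r : 𝓡 i, ∀ b : A, ¬ EquivFor pr i a b → pr i r a b ∧ ¬ pr i r b a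

/-- for a top-rich agent `i` and strategy-proof `φ, ψ`:
`φ(R) R_i ψ(R)` for all profiles `R` iff `i`'s (i-relevant) menu under `ψ` is
included in her menu under `φ` at every opposing profile. -/
theorem stmt_1 (pr : ∀ i, 𝓡 i → A → A → Prop)
    (hTotal : ∀ i r, Total (pr i r)) (hTrans : ∀ i r, Transitive (pr i r))
    (φ ψ : (∀ i, 𝓡 i) → A)
    (hφ : StrategyProof pr φ) (hψ : StrategyProof pr ψ)
    (i : ι) (hrich : TopRich pr i) :
    (∀ R : ∀ i, 𝓡 i, pr i (R i) (φ R) (ψ R)) ↔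
    (∀ (R : ∀ i, 𝓡 i) (r' : 𝓡 i), ∃ r'' : 𝓡 i,
        EquivFor pr i (ψ (Function.update R i r')) (φ (Function.update R i r''))) := by
  constructor
  · intro h1 R r'
    set a := ψ (Function.update R i r') with ha
    obtain ⟨r, hr⟩ := hrich a
    refine ⟨r, ?_⟩
    set R' := Function.update R i r with hR'
    -- SP of ψ at R' deviating to r'
    have h2 : pr i r (ψ R') a := by
      have := hψ R' i r'
      simpa [hR', Function.update_idem] using this
    have h3 : pr i r (φ R') (ψ R') := by
      have := h1 R'
      simpa [hR'] using this
    have h4 : pr i r (φ R') a := hTrans i r h3 h2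
    by_contra hne
    exact (hr _ hne).2 h4
  · intro h2 R
    obtain ⟨r'', heq⟩ := h2 R (R i)
    have hψR : ψ (Function.update R i (R i)) = ψ R := by
      rw [Function.update_eq_self]
    rw [hψR] at heq
    have hsp : pr i (R i) (φ R) (φ (Function.update R i r'')) := hφ R i r''
    exact hTrans i (R i) hsp (heq (R i)).2

end
end

section
/- Let φ and ψ be two strategy-proof mechanisms on an environment whose preference domain is top-rich for every agent. Then φ Pareto-dominates ψ if and only if for every agent i and every opposing profile R_{-i}, M_{i|i}^ψ(R_{-i}) ⊆ M_{i|i}^φ(R_{-i}), with strict inclusion for at least one agent and one opposing profile. -/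
section

variable {ι A : Type*} [DecidableEq ι] {𝓡 : ι → Type*}

/-- `φ` Pareto-dominates `ψ`. -/
def ParetoDom (pr : ∀ i, 𝓡 i → A → A → Prop) (φ ψ : (∀ i, 𝓡 i) → A) : Prop :=
  (∀ (R : ∀ i, 𝓡 i) (i : ι), pr i (R i) (φ R) (ψ R)) ∧
  ∃ (R : ∀ i, 𝓡 i) (i : ι), pr i (R i) (φ R) (ψ R) ∧ ¬ pr i (R i) (ψ R) (φ R)

/-- on a top-rich environment, `φ` Pareto-dominates `ψ` iff it gives every
agent weakly larger (i-relevant) menus at every opposing profile, and a strictly larger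
menu to some agent at some opposing profile. -/
theorem stmt_2 (pr : ∀ i, 𝓡 i → A → A → Prop)
    (hTotal : ∀ i r, Total (pr i r)) (hTrans : ∀ i r, Transitive (pr i r))
    (φ ψ : (∀ i, 𝓡 i) → A)
    (hφ : StrategyProof pr φ) (hψ : StrategyProof pr ψ)
    (hrich : ∀ i, TopRich pr i) :
    ParetoDom pr φ ψ ↔
    ((∀ (i : ι) (R : ∀ i, 𝓡 i) (r' : 𝓡 i), ∃ r'' : 𝓡 i,
        EquivFor pr i (ψ (Function.update R i r')) (φ (Function.update R i r''))) ∧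
      ∃ (i : ι) (R : ∀ i, 𝓡 i) (r'' : 𝓡 i), ∀ r' : 𝓡 i,
        ¬ EquivFor pr i (φ (Function.update R i r'')) (ψ (Function.update R i r'))) := by
  constructor
  · rintro ⟨hweak, R₀, i₀, hfs, hns⟩
    constructor
    · intro i R r'
      obtain ⟨r, hr⟩ := hrich i (ψ (Function.update R i r'))
      refine ⟨r, ?_⟩
      have h1 : pr i r (ψ (Function.update R i r)) (ψ (Function.update R i r')) := by
        have := hψ (Function.update R i r) i r'
        simpa [Function.update_idem, Function.update_self] using this
      have h2 : pr i r (φ (Function.update R i r)) (ψ (Function.update R i r)) := by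
        have := hweak (Function.update R i r) i
        simpa [Function.update_self] using this
      have h3 : pr i r (φ (Function.update R i r)) (ψ (Function.update R i r')) :=
        hTrans i r h2 h1
      by_contra hne
      exact (hr _ hne).2 h3
    · refine ⟨i₀, R₀, R₀ i₀, fun r' hEq => ?_⟩
      rw [Function.update_eq_self] at hEq
      have h1 := (hEq (R₀ i₀)).2
      have h2 : pr i₀ (R₀ i₀) (ψ R₀) (ψ (Function.update R₀ i₀ r')) := hψ R₀ i₀ r'
      exact hns (hTrans i₀ _ h2 h1)
  · rintro ⟨hmenu, i, R, r'', hstr⟩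
    have hweak : ∀ (S : ∀ j, 𝓡 j) (j : ι), pr j (S j) (φ S) (ψ S) := by
      intro S j
      obtain ⟨rr, hEq⟩ := hmenu j S (S j)
      rw [Function.update_eq_self] at hEq
      have h1 : pr j (S j) (φ S) (φ (Function.update S j rr)) := hφ S j rr
      have h2 : pr j (S j) (φ (Function.update S j rr)) (ψ S) := (hEq (S j)).2
      exact hTrans j _ h1 h2
    refine ⟨hweak, ?_⟩
    obtain ⟨r, hr⟩ := hrich i (φ (Function.update R i r''))
    refine ⟨Function.update R i r, i, ?_, ?_⟩
    · simpa [Function.update_self] using hweak (Function.update R i r) i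
    · intro hcon
      simp only [Function.update_self] at hcon
      have hfb : pr i r (φ (Function.update R i r)) (φ (Function.update R i r'')) := by
        have := hφ (Function.update R i r) i r''
        simpa [Function.update_idem, Function.update_self] using this
      have hEqb : EquivFor pr i (φ (Function.update R i r'')) (φ (Function.update R i r)) := by
        by_contra hne
        exact (hr _ hne).2 hfb
      have hbs := hr _ (hstr r)
      exact hbs.2 (hTrans i r hcon (hEqb r).2)

end
end

section
/- Let φ be a strategy-proof mechanism on a top-rich environment. Then φ is constrained Pareto-efficient (not Pareto-dominated by any strategy-proof mechanism) if and only if φ maximises individuals' freedom (there is no strategy-proof mechanism giving every agent weakly larger menus at every opposing profile and some agent a strictly larger menu at some opposing profile). -/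
section

variable {ι A : Type*} [DecidableEq ι] {𝓡 : ι → Type*}

/-- `ψ` grants weakly more freedom than `φ` to every agent and strictly more to some
agent: every (i-relevant) menu under `φ` is included in the corresponding menu under
`ψ`, with strict inclusion somewhere. -/
def MoreFreedom (pr : ∀ i, 𝓡 i → A → A → Prop) (ψ φ : (∀ i, 𝓡 i) → A) : Prop :=
  (∀ (i : ι) (R : ∀ i, 𝓡 i) (r' : 𝓡 i), ∃ r'' : 𝓡 i,
      EquivFor pr i (φ (Function.update R i r')) (ψ (Function.update R i r''))) ∧
  ∃ (i : ι) (R : ∀ i, 𝓡 i) (r'' : 𝓡 i), ∀ r' : 𝓡 i,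
      ¬ EquivFor pr i (ψ (Function.update R i r'')) (φ (Function.update R i r'))

/-- a strategy-proof mechanism on a top-rich environment is constrained
Pareto-efficient iff it maximises individuals' freedom. -/
theorem stmt_3 (pr : ∀ i, 𝓡 i → A → A → Prop)
    (hTotal : ∀ i r, Total (pr i r)) (hTrans : ∀ i r, Transitive (pr i r))
    (φ : (∀ i, 𝓡 i) → A) (hφ : StrategyProof pr φ)
    (hrich : ∀ i, TopRich pr i) :
    (∀ ψ : (∀ i, 𝓡 i) → A, StrategyProof pr ψ → ¬ ParetoDom pr ψ φ) ↔
    (¬ ∃ ψ : (∀ i, 𝓡 i) → A, StrategyProof pr ψ ∧ MoreFreedom pr ψ φ) := by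
  constructor
  · -- no dominator → no freedom improver
    rintro hCE ⟨ψ, hψ, ⟨hweak, i, R₀, r'', hstrict⟩⟩
    refine hCE ψ hψ ⟨?_, ?_⟩
    · -- weak domination
      intro R j
      obtain ⟨s, heq⟩ := hweak j R (R j)
      have h1 := hψ R j s
      have h2 : pr j (R j) (ψ (Function.update R j s)) (φ R) := by
        have := (heq (R j)).2
        rwa [Function.update_eq_self] at this
      exact hTrans j (R j) h1 h2
    · -- strict domination somewhere
      set b := ψ (Function.update R₀ i r'') with hb
      obtain ⟨rb, hrb⟩ := hrich i b
      set R := Function.update R₀ i rb with hR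
      have hRb : Function.update R i r'' = Function.update R₀ i r'' := by
        rw [hR, Function.update_idem]
      have hψR : pr i rb (ψ R) b := by
        have := hψ R i r''
        have hRi : R i = rb := by rw [hR, Function.update_self]
        rw [hRi, hRb] at this
        exact this
      -- b is equivalent to ψ R
      have hequiv : EquivFor pr i b (ψ R) := by
        by_contra hne
        exact (hrb (ψ R) hne).2 hψR
      -- φ R is not equivalent to b
      have hφne : ¬ EquivFor pr i b (φ R) := by
        rw [hR]
        exact hstrict rb
      obtain ⟨h3, h4⟩ := hrb (φ R) hφne
      have hRi : R i = rb := by rw [hR, Function.update_self]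
      refine ⟨R, i, ?_, ?_⟩
      · rw [hRi]
        exact hTrans i rb ((hequiv rb).2) h3
      · rw [hRi]
        intro h
        exact h4 (hTrans i rb h ((hequiv rb).2))
  · -- no freedom improver → no dominator
    rintro hMF ψ hψ ⟨hwd, Rs, is, hs1, hs2⟩
    refine hMF ⟨ψ, hψ, ⟨?_, ?_⟩⟩
    · -- weak freedom
      intro i R r'
      set a := φ (Function.update R i r') with ha
      obtain ⟨ra, hra⟩ := hrich i a
      set R'' := Function.update R i ra with hR''
      have hupd : Function.update R'' i r' = Function.update R i r' := by
        rw [hR'', Function.update_idem]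
      have hRi : R'' i = ra := by rw [hR'', Function.update_self]
      have hsp : pr i ra (φ R'') a := by
        have := hφ R'' i r'
        rwa [hRi, hupd, ← ha] at this
      have hφeq : EquivFor pr i a (φ R'') := by
        by_contra hne
        exact (hra (φ R'') hne).2 hsp
      have hψa : pr i ra (ψ R'') a := by
        have h1 := hwd R'' i
        rw [hRi] at h1
        exact hTrans i ra h1 ((hφeq ra).2)
      refine ⟨ra, ?_⟩
      by_contra hne
      exact (hra (ψ R'') (fun h => hne h)).2 hψa
    · -- strict freedom
      refine ⟨is, Rs, Rs is, ?_⟩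
      intro r' he
      rw [Function.update_eq_self] at he
      apply hs2
      exact hTrans is (Rs is) (hφ Rs is r') ((he (Rs is)).2)

end
end

section
/- In the setting where agent i's preference R_i is uniform over strict orders on a finite set A_i of size m and independent of R_{-i}, and φ is strategy-proof, the expected menu size satisfies E[Δ_{i|i}^φ(R_{-i})] = m · P[ρ_i^φ(R) = 1], i.e. the expected cardinality of i's menu equals m times the probability that i receives her most-preferred element. -/
/-! Since `i` receives her best menu element, she receives her top choice `σ⁻¹ 0` exactly when
it lies in her menu. For a uniformly random ranking `σ` the top choice is uniform on `A`
(transpositions permute the fibres of `σ ↦ σ⁻¹ 0`), so for each opposing profile this happens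
with probability `|menu| / m`. -/

section Rankings

variable {A β : Type*}

theorem Equiv.natCard_symm_apply_eq_eq [Finite A] [Finite β] (b : β) (a c : A) :
    Nat.card {σ : A ≃ β // σ.symm b = a} = Nat.card {σ : A ≃ β // σ.symm b = c} := by
  classical
  refine Nat.card_congr
    (Equiv.subtypeEquiv ((Equiv.swap a c).equivCongr (Equiv.refl β)) fun σ => ?_)
  rw [Equiv.symm_apply_eq, Equiv.symm_apply_eq, Equiv.equivCongr_apply_apply]
  simp

theorem Equiv.natCard_mul_natCard_symm_apply_eq [Fintype A] [Finite β] (b : β) (a : A) :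
    Nat.card A * Nat.card {σ : A ≃ β // σ.symm b = a} = Nat.card (A ≃ β) := by
  rw [← Nat.card_congr (Equiv.sigmaFiberEquiv fun σ : A ≃ β => σ.symm b), Nat.card_sigma,
    Finset.sum_congr rfl fun c _ => Equiv.natCard_symm_apply_eq_eq b c a,
    Finset.sum_const, Finset.card_univ, smul_eq_mul, Nat.card_eq_fintype_card]

theorem Equiv.natCard_mul_natCard_symm_apply_mem [Fintype A] [Finite β] (b : β) (B : Set A) :
    Nat.card A * Nat.card {σ : A ≃ β // σ.symm b ∈ B} = B.ncard * Nat.card (A ≃ β) := by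
  classical
  rw [← Nat.card_congr (Equiv.sigmaSubtypeFiberEquivSubtype (fun σ : A ≃ β => σ.symm b)
      (q := (· ∈ B)) fun _ => Iff.rfl), Nat.card_sigma,
    Finset.mul_sum, Finset.sum_congr rfl fun c _ => Equiv.natCard_mul_natCard_symm_apply_eq b c.1,
    Finset.sum_const, Finset.card_univ, smul_eq_mul, ← Nat.card_eq_fintype_card,
    Nat.card_coe_set_eq]

theorem Equiv.ncard_setOf_le_apply {m : ℕ} (σ : A ≃ Fin m) (y : A) :
    {x : A | (σ x : ℕ) ≤ σ y}.ncard = σ y + 1 := by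
  rw [show {x : A | (σ x : ℕ) ≤ σ y} = σ ⁻¹' Set.Iic (σ y) from rfl,
    Set.ncard_preimage_of_injective_subset_range σ.injective (by simp), ← Finset.coe_Iic,
    Set.ncard_coe_finset, Fin.card_Iic]

variable {m : ℕ} [NeZero m] {f : (A ≃ Fin m) → A}

theorem ncard_setOf_le_eq_one_iff_mem_range
    (hf : ∀ (σ : A ≃ Fin m) (a : A), a ∈ Set.range f → (σ (f σ) : ℕ) ≤ σ a)
    (σ : A ≃ Fin m) :
    {x : A | (σ x : ℕ) ≤ σ (f σ)}.ncard = 1 ↔ σ.symm 0 ∈ Set.range f := by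
  rw [σ.ncard_setOf_le_apply, Nat.add_eq_right, Fin.val_eq_zero_iff, ← σ.eq_symm_apply]
  refine ⟨fun h => ⟨σ, h⟩, fun h => σ.injective ?_⟩
  have hle := hf σ _ h
  rw [σ.apply_symm_apply, Fin.val_zero, Nat.le_zero] at hle
  rw [σ.apply_symm_apply, Fin.ext_iff, hle, Fin.val_zero]

theorem mul_natCard_ncard_setOf_le_eq_one [Fintype A] (hm : Fintype.card A = m)
    (hf : ∀ (σ : A ≃ Fin m) (a : A), a ∈ Set.range f → (σ (f σ) : ℕ) ≤ σ a) :
    m * Nat.card {σ : A ≃ Fin m // {x : A | (σ x : ℕ) ≤ σ (f σ)}.ncard = 1}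
      = (Set.range f).ncard * m.factorial := by
  rw [Nat.card_congr (Equiv.subtypeEquivRight (ncard_setOf_le_eq_one_iff_mem_range hf))]
  have hcount := Equiv.natCard_mul_natCard_symm_apply_mem (0 : Fin m) (Set.range f)
  rwa [Nat.card_congr ((Fintype.equivFinOfCardEq hm).equivCongr (Equiv.refl _)), Nat.card_perm,
    Nat.card_eq_fintype_card, hm, Nat.card_fin] at hcount

end Rankings

theorem stmt_5_general {A : Type*} [Fintype A] (m : ℕ) (hm : Fintype.card A = m)
    {Ω : Type*} [Fintype Ω] (w : Ω → ℝ)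
    (F : Ω → (A ≃ Fin m) → A)
    (hSP : ∀ (ω : Ω) (σ : A ≃ Fin m) (a : A), a ∈ Set.range (F ω) →
      (σ (F ω σ) : ℕ) ≤ σ a) :
    ∑ ω, w ω * (Set.ncard (Set.range (F ω)) : ℝ)
      = (m : ℝ) * ∑ ω, w ω *
          ((Nat.card {σ : A ≃ Fin m //
              Set.ncard {x : A | (σ x : ℕ) ≤ σ (F ω σ)} = 1} : ℝ) / (m.factorial : ℝ)) := by
  rw [Finset.mul_sum]
  refine Finset.sum_congr rfl fun ω _ => ?_
  have : Nonempty A := ⟨F ω (Fintype.equivFinOfCardEq hm)⟩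
  have : NeZero m := ⟨hm ▸ Fintype.card_ne_zero⟩
  have hcount : (m * Nat.card _ : ℝ) = (Set.range (F ω)).ncard * m.factorial :=
    mod_cast mul_natCard_ncard_setOf_le_eq_one hm (hSP ω)
  rw [mul_left_comm, ← mul_div_assoc, hcount, mul_div_cancel_right₀ _ (by positivity)]

/-- with `R_i` uniform over strict orders on `A_i` (`|A_i| = m`,
orders encoded as rankings `σ : A ≃ Fin m`, `x R_i y ↔ σ x ≤ σ y`), independent of
the (possibly random) opposing profile `ω ∈ Ω` (a finite probability space with
weights `w`), and with the strategy-proof mechanism given, for each opposing profile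
`ω`, by a function `F ω` of `i`'s report that always selects an optimal element of
the menu `Set.range (F ω)`, the expected menu size equals `m` times the probability
that `i` receives her most-preferred element (rank `ρ_i = 1`). -/
theorem stmt_5 {A : Type*} [Fintype A] (m : ℕ) (hm : Fintype.card A = m)
    {Ω : Type*} [Fintype Ω] (w : Ω → ℝ) (hw : ∀ ω, 0 ≤ w ω) (hw1 : ∑ ω, w ω = 1)
    (F : Ω → (A ≃ Fin m) → A)
    (hSP : ∀ (ω : Ω) (σ : A ≃ Fin m) (a : A), a ∈ Set.range (F ω) →
      (σ (F ω σ) : ℕ) ≤ σ a) :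
    ∑ ω, w ω * (Set.ncard (Set.range (F ω)) : ℝ)
      = (m : ℝ) * ∑ ω, w ω *
          ((Nat.card {σ : A ≃ Fin m //
              Set.ncard {x : A | (σ x : ℕ) ≤ σ (F ω σ)} = 1} : ℝ) / (m.factorial : ℝ)) :=
  stmt_5_general m hm w F hSP
end

section
/- Let φ, ψ be strategy-proof mechanisms, i, j agents with strict-order domains over finite sets A_i, A_j of equal size m, and fix deterministic opposing profiles R_{-i}, R'_{-j}, while R_i and R'_j are uniform over strict orders. Then Δ_{i|i}^φ(R_{-i}) ≥ Δ_{j|j}^ψ(R'_{-j}) if and only if the rank ρ_j^ψ(R') first-order stochastically dominates the rank ρ_i^φ(R). -/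
/-!
For a strategy-proof mechanism the outcome is the best element of the menu under the reported
ranking, so its rank exceeds `r` exactly when the ranking puts the whole menu at positions `≥ r`.
The number of such rankings depends only on the size of the menu and is antitone in it:
precomposing with an equivalence that carries the smaller menu into the larger one injects the
rankings for the larger menu into those for the smaller. It is positive exactly when the menu has
at most `m - r` elements, which gives the converse.
-/

open Set

section Rankings

variable {α β γ : Type*}

open Classical in
theorem exists_equiv_mapsTo_of_ncard_le [Fintype α] [Fintype β]
    (h : Fintype.card α = Fintype.card β) {S : Set α} {T : Set β} (hST : S.ncard ≤ T.ncard) :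
    ∃ e : α ≃ β, MapsTo e S T := by
  obtain ⟨T', hT'T, hcard⟩ := exists_subset_card_eq hST
  have hin : Fintype.card S = Fintype.card T' := by
    simp only [← Nat.card_eq_fintype_card, Nat.card_coe_set_eq, hcard]
  have hout : Fintype.card ↥Sᶜ = Fintype.card ↥T'ᶜ := by
    rw [Fintype.card_compl_set, Fintype.card_compl_set, h, hin]
  refine ⟨(Equiv.sumCompl (· ∈ S)).symm.trans
    (((Fintype.equivOfCardEq hin).sumCongr (Fintype.equivOfCardEq hout)).trans
      (Equiv.sumCompl (· ∈ T'))), fun a ha => hT'T ?_⟩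
  simp only [Equiv.trans_apply, Equiv.sumCompl_symm_apply_of_pos ha, Equiv.sumCongr_apply,
    Sum.map_inl]
  exact (Fintype.equivOfCardEq hin ⟨a, ha⟩).2

theorem card_equiv_mapsTo_pos_iff [Fintype α] [Fintype β]
    (h : Fintype.card α = Fintype.card β) {S : Set α} {T : Set β} :
    0 < Nat.card {e : α ≃ β // MapsTo e S T} ↔ S.ncard ≤ T.ncard := by
  rw [Nat.card_pos_iff, nonempty_subtype]
  refine ⟨fun ⟨⟨e, he⟩, _⟩ => ncard_le_ncard_of_injOn e he e.injective.injOn, fun hST => ?_⟩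
  exact ⟨exists_equiv_mapsTo_of_ncard_le h hST, inferInstance⟩

theorem card_equiv_mapsTo_le_of_ncard_le [Fintype α] [Fintype β] [Finite γ]
    (h : Fintype.card α = Fintype.card β) {S : Set α} {T : Set β} (hTS : T.ncard ≤ S.ncard)
    (U : Set γ) :
    Nat.card {σ : α ≃ γ // MapsTo σ S U} ≤ Nat.card {τ : β ≃ γ // MapsTo τ T U} := by
  obtain ⟨e, he⟩ := exists_equiv_mapsTo_of_ncard_le h.symm hTS
  refine Nat.card_le_card_of_injective (fun σ => ⟨e.trans σ, σ.2.comp he⟩) fun σ σ' hσσ' => ?_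
  have : e.trans σ.1 = e.trans σ'.1 := congrArg Subtype.val hσσ'
  exact Subtype.ext <| Equiv.ext fun a => by simpa using DFunLike.congr_fun this (e.symm a)

theorem ncard_setOf_val_le {m : ℕ} (σ : α ≃ Fin m) (x : α) :
    {y | (σ y : ℕ) ≤ σ x}.ncard = σ x + 1 := by
  have hrange : Iic (σ x : ℕ) ⊆ range (Fin.val ∘ σ) := fun n hn =>
    ⟨σ.symm ⟨n, lt_of_le_of_lt hn (σ x).2⟩, by simp⟩
  rw [← ncard_Iic_nat, ← ncard_preimage_of_injective_subset_range
    (Fin.val_injective.comp σ.injective) hrange]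
  rfl

theorem ncard_setOf_le_val (m r : ℕ) : {i : Fin m | r ≤ (i : ℕ)}.ncard = m - r := by
  rw [← ncard_Ico_nat, ← ncard_preimage_of_injective_subset_range Fin.val_injective
    fun n hn => ⟨⟨n, hn.2⟩, rfl⟩]
  congr 1
  ext i
  simp [i.2]

theorem lt_ncard_setOf_val_le_iff_mapsTo {m : ℕ} (σ : α ≃ Fin m) {M : Set α} {x : α}
    (hx : x ∈ M) (hmin : ∀ a ∈ M, (σ x : ℕ) ≤ σ a) (r : ℕ) :
    r < {y | (σ y : ℕ) ≤ σ x}.ncard ↔ MapsTo σ M {i | r ≤ (i : ℕ)} := by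
  rw [ncard_setOf_val_le, Nat.lt_succ_iff]
  exact ⟨fun hr a ha => hr.trans (hmin a ha), fun hM => hM hx⟩

end Rankings

/-- Let `f` and `g` be two strategy-proof mechanisms viewed as functions
of agent `i`'s (resp. `j`'s) report at fixed opposing profiles, over finite outcome
sets `A`, `B` of equal size `m`, with strict orders encoded as rankings
`σ : A ≃ Fin m` (`x R y ↔ σ x ≤ σ y`).  With the own report uniform over the `m!`
strict orders, `Δ_{i|i} ≥ Δ_{j|j}` iff the rank `ρ_j` first-order stochastically
dominates `ρ_i`, i.e. `P[ρ_i > r] ≤ P[ρ_j > r]` for every `r`, stated via counts of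
orders (both spaces having `m!` elements). -/
theorem stmt_6 {A B : Type*} [Fintype A] [Fintype B] (m : ℕ)
    (hA : Fintype.card A = m) (hB : Fintype.card B = m)
    (f : (A ≃ Fin m) → A) (g : (B ≃ Fin m) → B)
    (hf : ∀ (σ : A ≃ Fin m) (a : A), a ∈ Set.range f → (σ (f σ) : ℕ) ≤ σ a)
    (hg : ∀ (τ : B ≃ Fin m) (b : B), b ∈ Set.range g → (τ (g τ) : ℕ) ≤ τ b) :
    Set.ncard (Set.range g) ≤ Set.ncard (Set.range f) ↔
    ∀ r : ℕ,
      Nat.card {σ : A ≃ Fin m // r < Set.ncard {x : A | (σ x : ℕ) ≤ σ (f σ)}}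
        ≤ Nat.card {τ : B ≃ Fin m // r < Set.ncard {y : B | (τ y : ℕ) ≤ τ (g τ)}} := by
  simp only [fun σ r => lt_ncard_setOf_val_le_iff_mapsTo σ (mem_range_self σ) (hf σ) r,
    fun τ r => lt_ncard_setOf_val_le_iff_mapsTo τ (mem_range_self τ) (hg τ) r]
  refine ⟨fun h r => card_equiv_mapsTo_le_of_ncard_le (hA.trans hB.symm) h _, fun h => ?_⟩
  have hcardA : Fintype.card A = Fintype.card (Fin m) := by simp [hA]
  have hcardB : Fintype.card B = Fintype.card (Fin m) := by simp [hB]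
  have hsf : (range f).ncard ≤ m := by simpa [hA] using ncard_le_card (range f)
  -- `m - |range f|` is the largest threshold above which the menu of `f` still fits
  set r := m - (range f).ncard
  have hf_fits : 0 < Nat.card {σ : A ≃ Fin m // MapsTo σ (range f) {i | r ≤ (i : ℕ)}} := by
    rw [card_equiv_mapsTo_pos_iff hcardA, ncard_setOf_le_val]
    omega
  have hg_fits := (card_equiv_mapsTo_pos_iff hcardB).mp (hf_fits.trans_le (h r))
  rw [ncard_setOf_le_val] at hg_fits
  omega
end

section
/- Let φ be an efficient and strategy-proof assignment rule for n agents and n objects (strict preferences over objects, each agent receives exactly one object). Then there exists a preference profile R and an enumeration i_1, …, i_n of the agents such that for each k, the menu of agent i_k given R_{-i_k} has cardinality exactly k. -/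
lemma menu_key (m : ℕ)
    (φ : (Fin (m+1) → (Fin (m+1) ≃ Fin (m+1))) → (Fin (m+1) ≃ Fin (m+1)))
    (hSP : ∀ (R : Fin (m+1) → (Fin (m+1) ≃ Fin (m+1))) (i : Fin (m+1)) (r' : Fin (m+1) ≃ Fin (m+1)),
      ((R i) (φ R i) : ℕ) ≤ (R i) (φ (Function.update R i r') i))
    (hEff : ∀ (R : Fin (m+1) → (Fin (m+1) ≃ Fin (m+1))) (μ : Fin (m+1) ≃ Fin (m+1)),
      (∀ i, ((R i) (μ i) : ℕ) ≤ (R i) (φ R i)) → ∀ i, (R i) (μ i) = (R i) (φ R i))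
    (i : Fin (m+1)) :
    {o : Fin (m+1) | ∃ r' : Fin (m+1) ≃ Fin (m+1),
        o = φ (Function.update (fun _ => Equiv.refl (Fin (m+1))) i r') i}
      = Set.Ici (φ (fun _ => Equiv.refl (Fin (m+1))) i) := by
  classical
  set Rid : Fin (m+1) → (Fin (m+1) ≃ Fin (m+1)) := fun _ => Equiv.refl _ with hRid
  set μ := φ Rid with hμ
  have hRidself : Function.update Rid i (Equiv.refl (Fin (m+1))) = Rid := by
    funext j; by_cases h : j = i <;> simp [Function.update, h, hRid]
  ext o
  simp only [Set.mem_setOf_eq, Set.mem_Ici]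
  constructor
  · rintro ⟨r', rfl⟩
    have := hSP Rid i r'
    exact this
  · intro ho
    rcases eq_or_lt_of_le ho with heq | hlt
    · exact ⟨Equiv.refl _, by rw [hRidself]; exact heq.symm⟩
    by_contra hno
    push_neg at hno
    set r' : Fin (m+1) ≃ Fin (m+1) := o.cycleRange with hr'
    set Q := Function.update Rid i r' with hQ
    have hQi : Q i = r' := by simp [hQ]
    have hQj : ∀ j, j ≠ i → Q j = Equiv.refl _ := by
      intro j hj; simp [hQ, Function.update, hj, hRid]
    -- lower bound: μ i ≤ φ Q i
    have lb : (μ i : ℕ) ≤ (φ Q i : ℕ) := by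
      have := hSP Rid i r'
      simpa [hRid, hμ] using this
    -- φ Q i ≠ o
    have hne : φ Q i ≠ o := fun h => hno r' h.symm
    -- upper bound via SP at Q: r' (φ Q i) ≤ r' (μ i)
    have ub : (r' (φ Q i) : ℕ) ≤ (r' (μ i) : ℕ) := by
      have h2 : Function.update Q i (Equiv.refl (Fin (m+1))) = Rid := by
        rw [hQ, Function.update_idem, hRidself]
      have := hSP Q i (Equiv.refl _)
      rw [h2, hQi] at this
      exact this
    -- compute: φ Q i = μ i
    have hQival : φ Q i = μ i := by
      have hb : (r' (μ i) : ℕ) = (μ i : ℕ) + 1 := by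
        rw [hr']; exact Fin.coe_cycleRange_of_lt hlt
      have ha : φ Q i ≤ μ i := by
        rcases lt_trichotomy (φ Q i) o with h1 | h1 | h1
        · have : (r' (φ Q i) : ℕ) = (φ Q i : ℕ) + 1 := by
            rw [hr']; exact Fin.coe_cycleRange_of_lt h1
          rw [this, hb] at ub
          exact Fin.le_def.mpr (by omega)
        · exact absurd h1 hne
        · have : r' (φ Q i) = φ Q i := by
            rw [hr']; exact Fin.cycleRange_of_gt h1
          rw [this, hb] at ub
          have : (φ Q i : ℕ) ≤ (μ i : ℕ) + 1 := ub
          have h2 : (o : ℕ) < (φ Q i : ℕ) := h1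
          have h3 : (μ i : ℕ) < (o : ℕ) := hlt
          exact Fin.le_def.mpr (by omega)
      exact le_antisymm ha (Fin.le_def.mpr lb)
    -- efficiency contradiction: swap i and j := (φ Q)⁻¹ o
    set j := (φ Q).symm o with hj
    have hφQj : φ Q j = o := (φ Q).apply_symm_apply o
    have hji : j ≠ i := by
      intro h; rw [h, hQival] at hφQj; exact absurd hφQj hlt.ne
    set ν : Fin (m+1) ≃ Fin (m+1) := (Equiv.swap i j).trans (φ Q) with hν
    have hνi : ν i = o := by simp [hν, Equiv.swap_apply_left, hφQj]
    have hνj : ν j = μ i := by simp [hν, Equiv.swap_apply_right, hQival]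
    have hdom : ∀ k, ((Q k) (ν k) : ℕ) ≤ (Q k) (φ Q k) := by
      intro k
      by_cases hki : k = i
      · subst hki
        rw [hQi, hνi, hr', Fin.cycleRange_self]
        exact Nat.zero_le _
      · by_cases hkj : k = j
        · subst hkj
          rw [hQj j hji, hνj, hφQj]
          exact le_of_lt hlt
        · have : ν k = φ Q k := by
            simp [hν, Equiv.swap_apply_of_ne_of_ne hki hkj]
          rw [this]
    have := hEff Q ν hdom j
    rw [hQj j hji, hνj, hφQj] at this
    simp at this
    exact absurd this hlt.ne


/-- an efficient and strategy-proof assignment rule for `n` agents and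
`n` objects (agents and objects `Fin n`; outcomes bijections `Fin n ≃ Fin n`; strict
preferences encoded as rankings `σ : Fin n ≃ Fin n`, `x ≻ y ↔ σ x < σ y`) admits a
preference profile `R` and an enumeration `e` of the agents such that the menu of the
`k`-th agent `e k` given `R_{-e k}` has cardinality exactly `k` (1-indexed). -/
theorem stmt_9 (n : ℕ)
    (φ : (Fin n → (Fin n ≃ Fin n)) → (Fin n ≃ Fin n))
    (hSP : ∀ (R : Fin n → (Fin n ≃ Fin n)) (i : Fin n) (r' : Fin n ≃ Fin n),
      ((R i) (φ R i) : ℕ) ≤ (R i) (φ (Function.update R i r') i))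
    (hEff : ∀ (R : Fin n → (Fin n ≃ Fin n)) (μ : Fin n ≃ Fin n),
      (∀ i, ((R i) (μ i) : ℕ) ≤ (R i) (φ R i)) → ∀ i, (R i) (μ i) = (R i) (φ R i)) :
    ∃ (R : Fin n → (Fin n ≃ Fin n)) (e : Fin n ≃ Fin n),
      ∀ k : Fin n,
        Set.ncard {o : Fin n | ∃ r' : Fin n ≃ Fin n,
            o = φ (Function.update R (e k) r') (e k)} = (k : ℕ) + 1 := by
  classical
  rcases n with _ | m
  · exact ⟨fun _ => Equiv.refl _, Equiv.refl _, fun k => k.elim0⟩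
  set Rid : Fin (m+1) → (Fin (m+1) ≃ Fin (m+1)) := fun _ => Equiv.refl _ with hRid
  set μ := φ Rid with hμ
  refine ⟨Rid, (Fin.revPerm).trans μ.symm, fun k => ?_⟩
  have hi : μ ((Fin.revPerm.trans μ.symm) k) = Fin.rev k := by
    simp
  rw [menu_key m φ hSP hEff ((Fin.revPerm.trans μ.symm) k)]
  rw [← hμ, hi]
  rw [← Finset.coe_Ici, Set.ncard_coe_finset, Fin.card_Ici, Fin.val_rev]
  omega
end

section
/- Let φ be a strategy-proof assignment rule, R a preference profile, and i, j two distinct agents. If the menu of i given R_{-i} contains the menu of j given R_{-j} as a subset, then i has power over j: the set {φ_j(R'_i, R_{-i}) : R'_i} of objects j may receive as i's report varies has cardinality at least 2. -/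
/-- for a strategy-proof assignment rule (`n` agents/objects, outcomes
bijections, strict preferences encoded as rankings with lower rank preferred), if the
menu of `j` given `R_{-j}` is a subset of the menu of `i` given `R_{-i}`, then `i`
has power over `j`: the set of objects `j` may receive as `i`'s report varies has
cardinality at least 2. -/
theorem stmt_10 (n : ℕ)
    (φ : (Fin n → (Fin n ≃ Fin n)) → (Fin n ≃ Fin n))
    (hSP : ∀ (R : Fin n → (Fin n ≃ Fin n)) (i : Fin n) (r' : Fin n ≃ Fin n),
      ((R i) (φ R i) : ℕ) ≤ (R i) (φ (Function.update R i r') i))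
    (R : Fin n → (Fin n ≃ Fin n)) (i j : Fin n) (hij : i ≠ j)
    (hsub : {o : Fin n | ∃ r', o = φ (Function.update R j r') j}
        ⊆ {o : Fin n | ∃ r', o = φ (Function.update R i r') i}) :
    2 ≤ Set.ncard {o : Fin n | ∃ r', o = φ (Function.update R i r') j} := by
  set S : Set (Fin n) := {o : Fin n | ∃ r', o = φ (Function.update R i r') j} with hS
  -- x is what j gets at the true profile
  have hxj : φ R j ∈ {o : Fin n | ∃ r', o = φ (Function.update R j r') j} :=
    ⟨R j, by rw [Function.update_eq_self]⟩
  obtain ⟨r', hr'⟩ := hsub hxj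
  -- under report r', agent i gets φ R j, so j gets something else
  have hxS : φ R j ∈ S := ⟨R i, by rw [Function.update_eq_self]⟩
  have hyS : φ (Function.update R i r') j ∈ S := ⟨r', rfl⟩
  have hne : φ (Function.update R i r') j ≠ φ R j := by
    intro h
    have : φ (Function.update R i r') j = φ (Function.update R i r') i := by
      rw [h, hr']
    exact hij ((φ (Function.update R i r')).injective this).symm
  have hpair : ({φ R j, φ (Function.update R i r') j} : Set (Fin n)) ⊆ S := by
    intro o ho
    rcases ho with h | h <;> subst h
    · exact hxS
    · exact hyS
  calc 2 = ({φ R j, φ (Function.update R i r') j} : Set (Fin n)).ncard :=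
        (Set.ncard_pair hne.symm).symm
    _ ≤ S.ncard := Set.ncard_le_ncard hpair (Set.toFinite S)
end

section
/- In the Top Trading Cycles rule with n agents each initially owning one distinct object, for any two agents i and j there exists an opposing preference profile R_{-i} such that i's menu for j is the entire object set: {φ_j(R_i, R_{-i}) : R_i} = O. -/
/-!
Relabel the agents so that `i` is agent `0` and `j` is agent `0` or the last agent. Every
opponent `k ≠ 0` ranks the endowments cyclically downwards starting from `ω (k - 1)`, except the
last agent, who ranks `ω 0 ≻ ω 1 ≻ ⋯ ≻ ω last`. If agent `0` top-ranks `ω t` with `t ≠ last`, the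
cycle `0 → t → t - 1 → ⋯ → 1 → 0` clears first; afterwards everything the last agent prefers to
`ω (t + 1)` is gone, while agent `t + 1`'s best remaining object is the last agent's endowment, so
these two swap. If `t = last`, agent `0` and the last agent swap at once. So agent `0` receives
`ω t` and the last agent `ω (t + 1)`, and both menus are full. Each clearing step is forced by the
core property: a member of a clearing coalition who did worse than her trade would hold an object
that some agent outside the coalition receives.
-/

open Equiv Finset

theorem Equiv.Perm.exists_apply_eq_apply_eq {α : Type*} [DecidableEq α] {a b c d : α}
    (hab : a ≠ b) (hcd : c ≠ d) : ∃ e : Perm α, e a = c ∧ e b = d := by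
  refine ⟨(swap a c).trans (swap (swap a c b) d), ?_, by simp⟩
  have hc : swap a c a ≠ swap a c b := (swap a c).injective.ne hab
  rw [swap_apply_left] at hc
  simp [swap_apply_of_ne_of_ne hc hcd]

theorem Equiv.swap_apply_mem_pair {α : Type*} [DecidableEq α] {a b k : α}
    (hk : k ∈ ({a, b} : Finset α)) : swap a b k ∈ ({a, b} : Finset α) := by
  rcases mem_insert.mp hk with rfl | hk
  · simp
  · simp [mem_singleton.mp hk]

section CoreRule

variable {n : ℕ}

def IsCoreRule (ω : Fin n ≃ Fin n) (φ : (Fin n → (Fin n ≃ Fin n)) → (Fin n ≃ Fin n)) : Prop :=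
  ∀ (R : Fin n → (Fin n ≃ Fin n)) (S : Finset (Fin n)) (μ : Fin n ≃ Fin n),
    (∀ i ∈ S, μ i ∈ S.image ω) →
    (∀ i ∈ S, ((R i) (μ i) : ℕ) ≤ (R i) (φ R i)) →
    ∀ i ∈ S, μ i = φ R i

variable {ω : Fin n ≃ Fin n} {φ : (Fin n → (Fin n ≃ Fin n)) → (Fin n ≃ Fin n)}

theorem IsCoreRule.apply_eq_of_trade (hφ : IsCoreRule ω φ) {R : Fin n → (Fin n ≃ Fin n)}
    {S : Finset (Fin n)} {c : Perm (Fin n)} (hc : ∀ k ∈ S, c k ∈ S)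
    (htaken : ∀ k ∈ S, ∀ a, R k (ω a) < R k (ω (c k)) → ∃ b ∉ S, φ R b = ω a)
    {k : Fin n} (hk : k ∈ S) : φ R k = ω (c k) := by
  refine (hφ R S (c.trans ω) (fun k hk ↦ mem_image_of_mem ω (hc k hk)) (fun k hk ↦ ?_) k hk).symm
  by_contra! hlt
  obtain ⟨b, hbS, hb⟩ := htaken k hk (ω.symm (φ R k)) (by rwa [apply_symm_apply])
  rw [apply_symm_apply, (φ R).injective.eq_iff] at hb
  exact hbS (hb ▸ hk)

theorem IsCoreRule.apply_eq_of_top (hφ : IsCoreRule ω φ) {R : Fin n → (Fin n ≃ Fin n)}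
    {S : Finset (Fin n)} {c : Perm (Fin n)} (hc : ∀ k ∈ S, c k ∈ S)
    (htop : ∀ k ∈ S, (R k (ω (c k)) : ℕ) = 0) {k : Fin n} (hk : k ∈ S) :
    φ R k = ω (c k) :=
  hφ.apply_eq_of_trade hc (fun k hk a ha ↦ by simp [Fin.lt_def, htop k hk] at ha) hk

/-- The rule `φ` with agent `e p` renamed `p`. -/
def relabel (e : Perm (Fin n)) (φ : (Fin n → (Fin n ≃ Fin n)) → (Fin n ≃ Fin n)) :
    (Fin n → (Fin n ≃ Fin n)) → (Fin n ≃ Fin n) :=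
  fun R ↦ e.trans (φ (R ∘ e.symm))

theorem relabel_update_apply (e : Perm (Fin n)) (R : Fin n → (Fin n ≃ Fin n)) (i j : Fin n)
    (r : Fin n ≃ Fin n) :
    relabel e φ (Function.update R i r) j = φ (Function.update (R ∘ e.symm) (e i) r) (e j) := by
  simp [relabel, Function.update_comp_equiv]

theorem IsCoreRule.relabel (hφ : IsCoreRule ω φ) (e : Perm (Fin n)) :
    IsCoreRule (e.trans ω) (relabel e φ) := by
  intro R S μ hμ hrank k hk
  have key := hφ (R ∘ e.symm) (S.map e.toEmbedding) (e.symm.trans μ) ?_ ?_ (e k)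
    (mem_map_equiv.mpr (by simpa using hk))
  · simpa [_root_.relabel] using key
  · intro a ha
    obtain ⟨k, hk, rfl⟩ := mem_map.mp ha
    obtain ⟨l, hl, hlk⟩ := mem_image.mp (hμ k hk)
    exact mem_image.mpr ⟨e l, mem_map_of_mem _ hl, by simpa using hlk⟩
  · intro a ha
    obtain ⟨k, hk, rfl⟩ := mem_map.mp ha
    simpa [_root_.relabel] using hrank k hk

end CoreRule

section ChainProfile

variable {m : ℕ} {ω : Fin (m + 1) ≃ Fin (m + 1)}
  {φ : (Fin (m + 1) → (Fin (m + 1) ≃ Fin (m + 1))) → (Fin (m + 1) ≃ Fin (m + 1))}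

theorem Fin.cycleRange_le_of_le {t a : Fin (m + 1)} (ha : a ≤ t) : Fin.cycleRange t a ≤ t := by
  rw [Fin.cycleRange_apply]
  split_ifs with hlt
  · exact Fin.add_one_le_of_lt hlt
  · exact Fin.zero_le t
  · exact ha

theorem Fin.cycleRange_symm_of_le {t k : Fin (m + 1)} (hk : k ≤ t) :
    (Fin.cycleRange t).symm k = if k = 0 then t else k - 1 := by
  split_ifs with h0
  · rw [h0, Fin.cycleRange_symm_zero]
  · rw [symm_apply_eq, Fin.cycleRange_of_lt, sub_add_cancel]
    exact lt_of_lt_of_le (Fin.sub_one_lt_iff.mpr (Fin.pos_iff_ne_zero.mpr h0)) hk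

/-- The ranking `ω t ≻ ω (t - 1) ≻ ⋯ ≻ ω 0 ≻ ω last ≻ ⋯ ≻ ω (t + 1)`: the rank of `ω a` is
`t - a` modulo `m + 1`. -/
def descRanking (ω : Fin (m + 1) ≃ Fin (m + 1)) (t : Fin (m + 1)) : Fin (m + 1) ≃ Fin (m + 1) :=
  ω.symm.trans (Equiv.subLeft t)

theorem descRanking_apply (t a : Fin (m + 1)) : descRanking ω t (ω a) = t - a := by
  simp [descRanking]

theorem val_descRanking_apply (t a : Fin (m + 1)) :
    (descRanking ω t (ω a) : ℕ) = if a ≤ t then (t : ℕ) - a else m + 1 + (t : ℕ) - a := by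
  rw [descRanking_apply]
  split_ifs with h
  · exact Fin.coe_sub_iff_le.mpr h
  · exact Fin.coe_sub_iff_lt.mpr (not_le.mp h)

def chainProfile (ω : Fin (m + 1) ≃ Fin (m + 1)) (t : Fin (m + 1)) :
    Fin (m + 1) → (Fin (m + 1) ≃ Fin (m + 1)) :=
  Function.update (fun k ↦ if k = Fin.last m then ω.symm else descRanking ω (k - 1)) 0
    (descRanking ω t)

theorem chainProfile_zero (t : Fin (m + 1)) : chainProfile ω t 0 = descRanking ω t := by
  simp [chainProfile]

theorem chainProfile_last (t : Fin (m + 1)) (h : (0 : Fin (m + 1)) ≠ Fin.last m) :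
    chainProfile ω t (Fin.last m) = ω.symm := by
  simp [chainProfile, h.symm]

theorem chainProfile_of_ne (t : Fin (m + 1)) {k : Fin (m + 1)} (h0 : k ≠ 0)
    (hlast : k ≠ Fin.last m) : chainProfile ω t k = descRanking ω (k - 1) := by
  simp [chainProfile, h0, hlast]

theorem update_chainProfile (s t : Fin (m + 1)) :
    Function.update (chainProfile ω s) 0 (descRanking ω t) = chainProfile ω t := by
  simp [chainProfile]

theorem IsCoreRule.apply_chainProfile_of_eq_last (hφ : IsCoreRule ω φ) {t : Fin (m + 1)}
    (ht : t = Fin.last m) :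
    φ (chainProfile ω t) 0 = ω t ∧ φ (chainProfile ω t) (Fin.last m) = ω (t + 1) := by
  subst ht
  have h0 : (chainProfile ω (Fin.last m) 0 (ω (swap 0 (Fin.last m) 0)) : ℕ) = 0 := by
    simp [chainProfile_zero, descRanking_apply]
  have htop : ∀ k ∈ ({0, Fin.last m} : Finset _),
      (chainProfile ω (Fin.last m) k (ω (swap 0 (Fin.last m) k)) : ℕ) = 0 := by
    simp only [mem_insert, mem_singleton, forall_eq_or_imp, forall_eq, h0, true_and]
    by_cases hm : (0 : Fin (m + 1)) = Fin.last m
    · rw [← hm] at h0 ⊢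
      exact h0
    · simp [chainProfile_last _ hm]
  have hc : ∀ k ∈ ({0, Fin.last m} : Finset _),
      swap 0 (Fin.last m) k ∈ ({0, Fin.last m} : Finset _) := fun _ ↦ swap_apply_mem_pair
  rw [Fin.last_add_one]
  constructor
  · simpa using hφ.apply_eq_of_top hc htop (by simp : 0 ∈ ({0, Fin.last m} : Finset _))
  · simpa using hφ.apply_eq_of_top hc htop (by simp : Fin.last m ∈ ({0, Fin.last m} : Finset _))

/-- The agents `0, …, t` form the cycle `0 → t → t - 1 → ⋯ → 1 → 0`. -/
theorem IsCoreRule.apply_chainProfile_of_le (hφ : IsCoreRule ω φ) {t : Fin (m + 1)}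
    (ht : t ≠ Fin.last m) {k : Fin (m + 1)} (hk : k ≤ t) :
    φ (chainProfile ω t) k = ω ((Fin.cycleRange t).symm k) := by
  refine hφ.apply_eq_of_top (S := Finset.Iic t) (fun k hk ↦ ?_) (fun k hk ↦ ?_)
    (Finset.mem_Iic.mpr hk)
  all_goals
    rw [Finset.mem_Iic] at hk
    rw [Fin.cycleRange_symm_of_le hk]
  · rw [Finset.mem_Iic]
    split_ifs with h0
    · exact le_rfl
    · exact (Fin.sub_one_lt_iff.mpr (Fin.pos_iff_ne_zero.mpr h0)).le.trans hk
  · split_ifs with h0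
    · simp [h0, chainProfile_zero, descRanking_apply]
    · have hlast : k ≠ Fin.last m := by
        rintro rfl
        exact ht (le_antisymm (Fin.le_last t) hk)
      simp [chainProfile_of_ne t h0 hlast, descRanking_apply]

theorem IsCoreRule.exists_le_apply_chainProfile (hφ : IsCoreRule ω φ) {t a : Fin (m + 1)}
    (ht : t ≠ Fin.last m) (ha : a ≤ t) : ∃ b ≤ t, φ (chainProfile ω t) b = ω a :=
  ⟨Fin.cycleRange t a, Fin.cycleRange_le_of_le ha, by
    rw [hφ.apply_chainProfile_of_le ht (Fin.cycleRange_le_of_le ha), symm_apply_apply]⟩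

/-- Once `0, …, t` are served, `t + 1` and the last agent swap endowments. -/
theorem IsCoreRule.apply_chainProfile_last_of_ne (hφ : IsCoreRule ω φ) {t : Fin (m + 1)}
    (ht : t ≠ Fin.last m) : φ (chainProfile ω t) (Fin.last m) = ω (t + 1) := by
  have htl : t < Fin.last m := Fin.lt_last_iff_ne_last.mpr ht
  have hsucc : ((t + 1 : Fin (m + 1)) : ℕ) = t + 1 := Fin.val_add_one_of_lt htl
  have hlast0 : (0 : Fin (m + 1)) ≠ Fin.last m := (Fin.ne_zero_of_lt htl).symm
  set S : Finset (Fin (m + 1)) := {t + 1, Fin.last m}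
  set c := swap (t + 1) (Fin.last m)
  have hbetter_last : ∀ a, chainProfile ω t (Fin.last m) (ω a) <
      chainProfile ω t (Fin.last m) (ω (c (Fin.last m))) → a ≤ t := by
    intro a hlt
    simp only [c, chainProfile_last t hlast0, symm_apply_apply, swap_apply_right, Fin.lt_def,
      hsucc] at hlt
    exact Fin.le_def.mpr (by omega)
  have hbetter : ∀ k ∈ S, ∀ a, chainProfile ω t k (ω a) < chainProfile ω t k (ω (c k)) →
      a ≤ t := by
    intro k hk a hlt
    rcases mem_insert.mp hk with rfl | hk
    · by_cases h : t + 1 = Fin.last m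
      · exact hbetter_last a (h ▸ hlt)
      have h0 : t + 1 ≠ 0 := fun h0 ↦ by simpa [hsucc] using congrArg Fin.val h0
      rw [chainProfile_of_ne t h0 h, add_sub_cancel_right, swap_apply_left, Fin.lt_def,
        val_descRanking_apply, val_descRanking_apply] at hlt
      have ham : (a : ℕ) ≤ m := Fin.le_last a
      simp only [not_le.mpr htl, if_false, Fin.val_last] at hlt
      split_ifs at hlt with hat
      · exact hat
      · rw [Fin.le_def] at hat ⊢
        omega
    · exact hbetter_last a (mem_singleton.mp hk ▸ hlt)
  have htaken : ∀ k ∈ S, ∀ a, chainProfile ω t k (ω a) < chainProfile ω t k (ω (c k)) →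
      ∃ b ∉ S, φ (chainProfile ω t) b = ω a := by
    intro k hk a hlt
    obtain ⟨b, hbt, hb⟩ := hφ.exists_le_apply_chainProfile ht (hbetter k hk a hlt)
    refine ⟨b, ?_, hb⟩
    have htm : (t : ℕ) < m := by simpa using Fin.lt_def.mp htl
    simp only [S, mem_insert, mem_singleton, Fin.ext_iff, hsucc, Fin.val_last]
    rw [Fin.le_def] at hbt
    omega
  simpa [c] using hφ.apply_eq_of_trade (fun _ ↦ swap_apply_mem_pair) htaken
    (by simp [S] : Fin.last m ∈ S)

theorem IsCoreRule.apply_chainProfile_zero (hφ : IsCoreRule ω φ) (t : Fin (m + 1)) :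
    φ (chainProfile ω t) 0 = ω t := by
  by_cases ht : t = Fin.last m
  · exact (hφ.apply_chainProfile_of_eq_last ht).1
  · rw [hφ.apply_chainProfile_of_le ht (Fin.zero_le t), Fin.cycleRange_symm_zero]

theorem IsCoreRule.apply_chainProfile_last (hφ : IsCoreRule ω φ) (t : Fin (m + 1)) :
    φ (chainProfile ω t) (Fin.last m) = ω (t + 1) := by
  by_cases ht : t = Fin.last m
  · exact (hφ.apply_chainProfile_of_eq_last ht).2
  · exact hφ.apply_chainProfile_last_of_ne ht

theorem IsCoreRule.surjective_chainProfile_apply (hφ : IsCoreRule ω φ) {p : Fin (m + 1)}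
    (hp : p = 0 ∨ p = Fin.last m) : Function.Surjective fun t ↦ φ (chainProfile ω t) p := by
  rcases hp with rfl | rfl
  · exact fun o ↦ ⟨ω.symm o, by simp [hφ.apply_chainProfile_zero]⟩
  · exact fun o ↦ ⟨ω.symm o - 1, by simp [hφ.apply_chainProfile_last]⟩

theorem exists_perm_apply_zero_and_endpoint (i j : Fin (m + 1)) :
    ∃ (e : Perm (Fin (m + 1))) (p : Fin (m + 1)), (p = 0 ∨ p = Fin.last m) ∧ e 0 = i ∧ e p = j := by
  by_cases hij : i = j
  · exact ⟨swap 0 i, 0, .inl rfl, swap_apply_left _ _, hij ▸ swap_apply_left _ _⟩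
  · have h0 : (0 : Fin (m + 1)) ≠ Fin.last m := fun h ↦ hij <| by
      have hm : m = 0 := by simpa [Fin.ext_iff] using h.symm
      exact Fin.ext (by omega)
    obtain ⟨e, he0, hel⟩ := Equiv.Perm.exists_apply_eq_apply_eq h0 hij
    exact ⟨e, Fin.last m, .inr rfl, he0, hel⟩

end ChainProfile

/-- let `φ` be the Top Trading Cycles rule with endowment `ω`
(agent `k` initially owns object `ω k`), characterised (à la Roth–Postlewaite, for
strict preferences) as the rule whose outcome at every profile is the unique strong
core allocation: no coalition `S` can reallocate its own endowments so that every
member is weakly better off unless this leaves every member's assignment unchanged.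
Then for any two agents `i`, `j` there is an opposing profile at which `i`'s menu for
`j` is the whole object set: varying `i`'s report ranges `j`'s assignment over all
objects.  (Preferences are rankings `σ : Fin n ≃ Fin n`, `x ≻ y ↔ σ x < σ y`.) -/
theorem stmt_11 (n : ℕ) (ω : Fin n ≃ Fin n)
    (φ : (Fin n → (Fin n ≃ Fin n)) → (Fin n ≃ Fin n))
    (hcore : ∀ (R : Fin n → (Fin n ≃ Fin n)) (S : Finset (Fin n)) (μ : Fin n ≃ Fin n),
      (∀ i ∈ S, μ i ∈ S.image ω) →
      (∀ i ∈ S, ((R i) (μ i) : ℕ) ≤ (R i) (φ R i)) →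
      ∀ i ∈ S, μ i = φ R i) :
    ∀ i j : Fin n, ∃ R : Fin n → (Fin n ≃ Fin n),
      {o : Fin n | ∃ r', o = φ (Function.update R i r') j} = Set.univ := by
  intro i j
  obtain ⟨m, rfl⟩ : ∃ m, n = m + 1 := Nat.exists_eq_add_one.mpr i.pos
  obtain ⟨e, p, hp, he0, hep⟩ := exists_perm_apply_zero_and_endpoint i j
  have hφ : IsCoreRule (e.trans ω) (relabel e φ) := IsCoreRule.relabel hcore e
  refine ⟨chainProfile (e.trans ω) 0 ∘ e.symm, Set.eq_univ_of_forall fun o ↦ ?_⟩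
  obtain ⟨t, ht⟩ := hφ.surjective_chainProfile_apply hp o
  refine ⟨descRanking (e.trans ω) t, ?_⟩
  rw [← he0, ← hep, ← relabel_update_apply, update_chainProfile]
  exact ht.symm
end

section
/- Under a serial dictatorship assignment rule with agent order i_1 < i_2 < … < i_n, for any preference profile and any two agents with k < l: the menu of i_l for i_k is a singleton (Δ_{i_l|i_k} = 1), and the menu of i_k for i_l has cardinality exactly 2 (Δ_{i_k|i_l} = 2). -/
section SDAux

variable {n : ℕ} (φ : (Fin n → (Fin n ≃ Fin n)) → (Fin n ≃ Fin n))

lemma sd_avail (R : Fin n → (Fin n ≃ Fin n)) (i : Fin n) :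
    ∀ j < i, φ R j ≠ φ R i := fun j hj => (φ R).injective.ne hj.ne

lemma sd_unique
    (hSD : ∀ (R : Fin n → (Fin n ≃ Fin n)) (i o : Fin n),
      (∀ j < i, φ R j ≠ o) → ((R i) (φ R i) : ℕ) ≤ (R i) o)
    (R : Fin n → (Fin n ≃ Fin n)) (i o : Fin n)
    (ho : ∀ j < i, φ R j ≠ o)
    (hmin : ∀ o', (∀ j < i, φ R j ≠ o') → ((R i) o : ℕ) ≤ (R i) o') :
    φ R i = o := by
  have h1 := hSD R i o ho
  have h2 := hmin (φ R i) (sd_avail φ R i)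
  exact (R i).injective (Fin.val_injective (le_antisymm h2 h1)).symm

lemma sd_congr
    (hSD : ∀ (R : Fin n → (Fin n ≃ Fin n)) (i o : Fin n),
      (∀ j < i, φ R j ≠ o) → ((R i) (φ R i) : ℕ) ≤ (R i) o)
    (R R' : Fin n → (Fin n ≃ Fin n)) (i : Fin n)
    (hpre : ∀ j < i, φ R j = φ R' j) (hi : R i = R' i) :
    φ R i = φ R' i := by
  apply sd_unique φ hSD R i (φ R' i)
  · intro j hj
    rw [hpre j hj]
    exact sd_avail φ R' i j hj
  · intro o' ho'
    have h := hSD R' i o' (fun j hj => by rw [← hpre j hj]; exact ho' j hj)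
    rw [hi]
    exact h

lemma sd_agree_aux
    (hSD : ∀ (R : Fin n → (Fin n ≃ Fin n)) (i o : Fin n),
      (∀ j < i, φ R j ≠ o) → ((R i) (φ R i) : ℕ) ≤ (R i) o) :
    ∀ (N : ℕ) (i : Fin n), i.val < N →
      ∀ R R' : Fin n → (Fin n ≃ Fin n), (∀ j ≤ i, R j = R' j) → φ R i = φ R' i := by
  intro N
  induction N with
  | zero => intro i hi; omega
  | succ N ih =>
    intro i hi R R' h
    refine sd_congr φ hSD R R' i (fun j hj => ?_) (h i le_rfl)
    exact ih j (by have h' : (j : ℕ) < (i : ℕ) := hj; omega) R R'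
      (fun j' hj' => h j' (hj'.trans hj.le))

lemma sd_agree
    (hSD : ∀ (R : Fin n → (Fin n ≃ Fin n)) (i o : Fin n),
      (∀ j < i, φ R j ≠ o) → ((R i) (φ R i) : ℕ) ≤ (R i) o)
    (i : Fin n) (R R' : Fin n → (Fin n ≃ Fin n)) (h : ∀ j ≤ i, R j = R' j) :
    φ R i = φ R' i :=
  sd_agree_aux φ hSD (i.val + 1) i (Nat.lt_succ_self _) R R' h

lemma sd_tail_aux
    (hSD : ∀ (R : Fin n → (Fin n ≃ Fin n)) (i o : Fin n),
      (∀ j < i, φ R j ≠ o) → ((R i) (φ R i) : ℕ) ≤ (R i) o)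
    (R : Fin n → (Fin n ≃ Fin n)) (k : Fin n) (r r' : Fin n ≃ Fin n)
    (hk : φ (Function.update R k r) k = φ (Function.update R k r') k) :
    ∀ (N : ℕ) (i : Fin n), i.val < N → k ≤ i →
      φ (Function.update R k r) i = φ (Function.update R k r') i := by
  intro N
  induction N with
  | zero => intro i hi; omega
  | succ N ih =>
    intro i hi hki
    rcases eq_or_lt_of_le hki with h | h
    · rw [← h]; exact hk
    · refine sd_congr φ hSD _ _ i (fun j hj => ?_) ?_
      · rcases lt_or_ge j k with hjk | hjk
        · have e1 : φ (Function.update R k r) j = φ R j :=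
            sd_agree φ hSD j _ _ (fun j' hj' =>
              Function.update_of_ne (ne_of_lt (hj'.trans_lt hjk)) _ _)
          have e2 : φ (Function.update R k r') j = φ R j :=
            sd_agree φ hSD j _ _ (fun j' hj' =>
              Function.update_of_ne (ne_of_lt (hj'.trans_lt hjk)) _ _)
          rw [e1, e2]
        · exact ih j (by have : j.val < i.val := hj; omega) hjk
      · rw [Function.update_of_ne (ne_of_gt h) _ _, Function.update_of_ne (ne_of_gt h) _ _]

lemma sd_tail
    (hSD : ∀ (R : Fin n → (Fin n ≃ Fin n)) (i o : Fin n),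
      (∀ j < i, φ R j ≠ o) → ((R i) (φ R i) : ℕ) ≤ (R i) o)
    (R : Fin n → (Fin n ≃ Fin n)) (k : Fin n) (r r' : Fin n ≃ Fin n)
    (hk : φ (Function.update R k r) k = φ (Function.update R k r') k)
    (i : Fin n) (hki : k ≤ i) :
    φ (Function.update R k r) i = φ (Function.update R k r') i :=
  sd_tail_aux φ hSD R k r r' hk (i.val + 1) i (Nat.lt_succ_self _) hki

/-- If the set of still-available objects before agent `j`'s turn is `B \ {t}`,
then agent `j` picks `m2` if `t = m1`, else `m1`, where `m1, m2` are `j`'s two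
favourites in `B`. -/
lemma sd_pick
    (hSD : ∀ (R : Fin n → (Fin n ≃ Fin n)) (i o : Fin n),
      (∀ j < i, φ R j ≠ o) → ((R i) (φ R i) : ℕ) ≤ (R i) o)
    (R' : Fin n → (Fin n ≃ Fin n)) (j : Fin n)
    (B : Finset (Fin n)) (t : Fin n)
    (h1 : ∀ o : Fin n, (∀ i : Fin n, i.val < j.val → φ R' i ≠ o) ↔ (o ∈ B ∧ o ≠ t))
    (m1 m2 : Fin n) (hm1B : m1 ∈ B)
    (hm1min : ∀ o ∈ B, ((R' j) m1 : ℕ) ≤ (R' j) o)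
    (hm2B : m2 ∈ B.erase m1)
    (hm2min : ∀ o ∈ B.erase m1, ((R' j) m2 : ℕ) ≤ (R' j) o) :
    φ R' j = if t = m1 then m2 else m1 := by
  by_cases hc : t = m1
  · rw [if_pos hc]
    apply sd_unique φ hSD R' j m2
    · exact fun i hi => ((h1 m2).mpr
        ⟨Finset.mem_of_mem_erase hm2B, by rw [hc]; exact Finset.ne_of_mem_erase hm2B⟩) i hi
    · intro o' ho'
      have h := (h1 o').mp (fun i hi => ho' i hi)
      refine hm2min o' (Finset.mem_erase.mpr ⟨?_, h.1⟩)
      rw [← hc]; exact h.2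
  · rw [if_neg hc]
    apply sd_unique φ hSD R' j m1
    · exact fun i hi => ((h1 m1).mpr ⟨hm1B, fun h => hc h.symm⟩) i hi
    · intro o' ho'
      exact hm1min o' ((h1 o').mp (fun i hi => ho' i hi)).1

end SDAux

/-- under a serial dictatorship with the natural agent order on `Fin n`
(characterised by: each agent's assigned object is her most preferred among objects
not assigned to earlier agents), for any profile `R` and agents `k < l`, the menu of
`l` for `k` is a singleton and the menu of `k` for `l` has cardinality exactly 2.
(Preferences are rankings `σ : Fin n ≃ Fin n`, `x ≻ y ↔ σ x < σ y`.) -/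
theorem stmt_12 (n : ℕ)
    (φ : (Fin n → (Fin n ≃ Fin n)) → (Fin n ≃ Fin n))
    (hSD : ∀ (R : Fin n → (Fin n ≃ Fin n)) (i o : Fin n),
      (∀ j < i, φ R j ≠ o) → ((R i) (φ R i) : ℕ) ≤ (R i) o)
    (R : Fin n → (Fin n ≃ Fin n)) (k l : Fin n) (hkl : k < l) :
    Set.ncard {o : Fin n | ∃ r', o = φ (Function.update R l r') k} = 1 ∧
    Set.ncard {o : Fin n | ∃ r', o = φ (Function.update R k r') l} = 2 := by
  classical
  constructor
  · -- part 1: the menu of l for k is a singleton {φ R k}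
    have hset : {o : Fin n | ∃ r', o = φ (Function.update R l r') k} = {φ R k} := by
      ext o
      simp only [Set.mem_setOf_eq, Set.mem_singleton_iff]
      constructor
      · rintro ⟨r', rfl⟩
        exact sd_agree φ hSD k _ R (fun j hj =>
          Function.update_of_ne (ne_of_lt (hj.trans_lt hkl)) _ _)
      · rintro rfl
        exact ⟨R l, by rw [Function.update_eq_self]⟩
    rw [hset]
    exact Set.ncard_singleton _
  · -- part 2
    set z : Fin n := ⟨0, k.pos⟩ with hz
    set Rx : Fin n → (Fin n → (Fin n ≃ Fin n)) :=
      fun x => Function.update R k (Equiv.swap x z) with hRx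
    set S : Set (Fin n) := {x | ∀ j < k, φ R j ≠ x} with hS
    -- picks before k are unchanged
    have hA : ∀ (x : Fin n) (j : Fin n), j < k → φ (Rx x) j = φ R j := by
      intro x j hj
      exact sd_agree φ hSD j _ _ (fun j' hj' =>
        Function.update_of_ne (ne_of_lt (hj'.trans_lt hj)) _ _)
    -- agent k picks x under Rx x, whenever x is available
    have hB : ∀ x ∈ S, φ (Rx x) k = x := by
      intro x hx
      apply sd_unique φ hSD (Rx x) k x
      · intro j hj
        rw [hA x j hj]
        exact hx j hj
      · intro o' _
        have : (Rx x) k = Equiv.swap x z := by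
          simp [hRx, Function.update_self]
        rw [this, Equiv.swap_apply_left]
        exact Nat.zero_le _
    -- preference of any agent other than k is unchanged under Rx x
    have hRxne : ∀ (x : Fin n) (j : Fin n), j ≠ k → (Rx x) j = R j := by
      intro x j hj
      simp [hRx, Function.update_of_ne hj]
    -- the menu equals the image of S under x ↦ φ (Rx x) l
    have hmenu : {o : Fin n | ∃ r', o = φ (Function.update R k r') l}
        = (fun x => φ (Rx x) l) '' S := by
      ext o
      simp only [Set.mem_setOf_eq, Set.mem_image]
      constructor
      · rintro ⟨r', rfl⟩
        refine ⟨φ (Function.update R k r') k, ?_, ?_⟩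
        · intro j hj
          have e : φ (Function.update R k r') j = φ R j :=
            sd_agree φ hSD j _ _ (fun j' hj' =>
              Function.update_of_ne (ne_of_lt (hj'.trans_lt hj)) _ _)
          rw [← e]
          exact sd_avail φ _ k j hj
        · set x := φ (Function.update R k r') k with hxdef
          have hxS : x ∈ S := by
            intro j hj
            have e : φ (Function.update R k r') j = φ R j :=
              sd_agree φ hSD j _ _ (fun j' hj' =>
                Function.update_of_ne (ne_of_lt (hj'.trans_lt hj)) _ _)
            rw [← e]
            exact sd_avail φ _ k j hj
          have hk : φ (Rx x) k = φ (Function.update R k r') k := by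
            rw [hB x hxS]
          exact sd_tail φ hSD R k (Equiv.swap x z) r' hk l hkl.le
      · rintro ⟨x, hx, rfl⟩
        exact ⟨Equiv.swap x z, rfl⟩
    -- the main induction on the agent position m
    have main : ∀ m : ℕ, k.val + 1 ≤ m → m ≤ l.val →
        ∃ (B : Finset (Fin n)) (χ : Fin n → Fin n),
          (∀ x ∈ S, ∀ o : Fin n,
            (∀ i : Fin n, i.val < m → φ (Rx x) i ≠ o) ↔ (o ∈ B ∧ o ≠ χ x)) ∧
          (∀ x ∈ S, χ x ∈ B) ∧
          (∀ b ∈ B, ∃ x ∈ S, χ x = b) ∧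
          B.card + m = n + 1 := by
      intro m hm1
      induction m, hm1 using Nat.le_induction with
      | base =>
        intro _
        refine ⟨(Finset.Ici k).image (φ R), id, ?_, ?_, ?_, ?_⟩
        · intro x hx o
          constructor
          · intro hL
            constructor
            · -- o ∈ B
              rcases lt_or_ge ((φ R).symm o) k with hlt | hle
              · exfalso
                exact hL ((φ R).symm o)
                  (by have h' : (((φ R).symm o : Fin n) : ℕ) < (k : ℕ) := hlt; omega)
                  (by rw [hA x _ hlt, Equiv.apply_symm_apply])
              · exact Finset.mem_image.mpr ⟨(φ R).symm o, Finset.mem_Ici.mpr hle,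
                  (φ R).apply_symm_apply o⟩
            · -- o ≠ x
              have := hL k (Nat.lt_succ_self _)
              rw [hB x hx] at this
              exact fun h => this h.symm
          · rintro ⟨hoB, hox⟩ i hi
            rcases lt_or_eq_of_le (Nat.lt_succ_iff.mp hi) with hik | hik
            · rw [hA x i hik]
              obtain ⟨j, hj, rfl⟩ := Finset.mem_image.mp hoB
              exact fun h => absurd ((φ R).injective h) (by
                have hkj : k ≤ j := Finset.mem_Ici.mp hj
                have : i < j := lt_of_lt_of_le hik hkj
                exact this.ne)
            · have : i = k := Fin.ext hik
              rw [this, hB x hx]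
              exact fun h => hox h.symm
        · intro x hx
          rcases lt_or_ge ((φ R).symm x) k with hlt | hle
          · exact absurd ((φ R).apply_symm_apply x) (hx _ hlt)
          · exact Finset.mem_image.mpr ⟨(φ R).symm x, Finset.mem_Ici.mpr hle,
              (φ R).apply_symm_apply x⟩
        · intro b hb
          obtain ⟨j, hj, rfl⟩ := Finset.mem_image.mp hb
          refine ⟨φ R j, ?_, rfl⟩
          intro j' hj'
          exact (φ R).injective.ne (by
            have hkj : k ≤ j := Finset.mem_Ici.mp hj
            exact (hj'.trans_le hkj).ne)
        · rw [Finset.card_image_of_injective _ (φ R).injective, Fin.card_Ici]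
          have := k.isLt
          omega
      | succ m hm ih =>
        intro hm2
        obtain ⟨B, χ, h1, h2, h3, h4⟩ := ih (by omega)
        have hln := l.isLt
        have hjlt : m < n := by omega
        set j : Fin n := ⟨m, hjlt⟩ with hjdef
        have hjk : k < j := by
          rw [Fin.lt_def]
          show (k : ℕ) < m
          omega
        have hBcard : 2 ≤ B.card := by omega
        obtain ⟨m1, hm1B, hm1min⟩ :=
          B.exists_min_image (fun o => ((R j) o : ℕ))
            (Finset.card_pos.mp (by omega))
        obtain ⟨m2, hm2B, hm2min⟩ :=
          (B.erase m1).exists_min_image (fun o => ((R j) o : ℕ))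
            (Finset.card_pos.mp (by rw [Finset.card_erase_of_mem hm1B]; omega))
        have hm2ne : m2 ≠ m1 := Finset.ne_of_mem_erase hm2B
        -- pick of agent j in run x
        have hpick : ∀ x ∈ S, φ (Rx x) j = if χ x = m1 then m2 else m1 := by
          intro x hx
          refine sd_pick φ hSD (Rx x) j B (χ x) (fun o => h1 x hx o) m1 m2 hm1B ?_ hm2B ?_
          · intro o ho
            rw [hRxne x j (ne_of_gt hjk)]
            exact hm1min o ho
          · intro o ho
            rw [hRxne x j (ne_of_gt hjk)]
            exact hm2min o ho
        refine ⟨B.erase m1, fun x => if χ x = m1 then m2 else χ x, ?_, ?_, ?_, ?_⟩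
        · intro x hx o
          constructor
          · intro hL
            have hBo := (h1 x hx o).mp (fun i hi => hL i (by omega))
            have hpo : φ (Rx x) j ≠ o := hL j (Nat.lt_succ_self _)
            rw [hpick x hx] at hpo
            by_cases hc : χ x = m1
            · rw [if_pos hc] at hpo
              simp only [if_pos hc]
              refine ⟨Finset.mem_erase.mpr ⟨by rw [← hc]; exact hBo.2, hBo.1⟩,
                fun h => hpo h.symm⟩
            · rw [if_neg hc] at hpo
              simp only [if_neg hc]
              refine ⟨Finset.mem_erase.mpr ⟨fun h => hpo (h.symm), hBo.1⟩, hBo.2⟩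
          · rintro ⟨hoB', hoχ'⟩ i hi
            rcases Nat.lt_or_ge i.val m with him | him
            · refine (h1 x hx o).mpr ⟨Finset.mem_of_mem_erase hoB', ?_⟩ i him
              by_cases hc : χ x = m1
              · rw [hc]; exact Finset.ne_of_mem_erase hoB'
              · simp only [if_neg hc] at hoχ'; exact hoχ'
            · have : i = j := Fin.ext (show (i : ℕ) = m by omega)
              rw [this, hpick x hx]
              by_cases hc : χ x = m1
              · rw [if_pos hc]
                simp only [if_pos hc] at hoχ'
                exact fun h => hoχ' h.symm
              · rw [if_neg hc]
                exact fun h => (Finset.ne_of_mem_erase hoB') h.symm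
        · intro x hx
          by_cases hc : χ x = m1
          · simp only [if_pos hc]; exact hm2B
          · simp only [if_neg hc]
            exact Finset.mem_erase.mpr ⟨hc, h2 x hx⟩
        · intro b hb
          obtain ⟨hbne, hbB⟩ := Finset.mem_erase.mp hb
          by_cases hbm2 : b = m2
          · obtain ⟨x, hx, hχ⟩ := h3 m1 hm1B
            exact ⟨x, hx, by simp only [if_pos hχ]; exact hbm2.symm⟩
          · obtain ⟨x, hx, hχ⟩ := h3 b hbB
            refine ⟨x, hx, ?_⟩
            simp only [hχ, if_neg hbne]
        · rw [Finset.card_erase_of_mem hm1B]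
          omega
    -- apply at m = l.val
    have hkl' : k.val + 1 ≤ l.val := by
      have h' : (k : ℕ) < (l : ℕ) := hkl
      omega
    obtain ⟨B, χ, h1, h2, h3, h4⟩ := main l.val hkl' le_rfl
    have hln := l.isLt
    have hBcard : 2 ≤ B.card := by omega
    obtain ⟨m1, hm1B, hm1min⟩ :=
      B.exists_min_image (fun o => ((R l) o : ℕ))
        (Finset.card_pos.mp (by omega))
    obtain ⟨m2, hm2B, hm2min⟩ :=
      (B.erase m1).exists_min_image (fun o => ((R l) o : ℕ))
        (Finset.card_pos.mp (by rw [Finset.card_erase_of_mem hm1B]; omega))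
    have hm2ne : m2 ≠ m1 := Finset.ne_of_mem_erase hm2B
    have hpick : ∀ x ∈ S, φ (Rx x) l = if χ x = m1 then m2 else m1 := by
      intro x hx
      refine sd_pick φ hSD (Rx x) l B (χ x) (fun o => h1 x hx o) m1 m2 hm1B ?_ hm2B ?_
      · intro o ho
        rw [hRxne x l (ne_of_gt hkl)]
        exact hm1min o ho
      · intro o ho
        rw [hRxne x l (ne_of_gt hkl)]
        exact hm2min o ho
    have himg : (fun x => φ (Rx x) l) '' S = {m2, m1} := by
      ext o
      simp only [Set.mem_image, Set.mem_insert_iff, Set.mem_singleton_iff]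
      constructor
      · rintro ⟨x, hx, rfl⟩
        rw [hpick x hx]
        by_cases hc : χ x = m1
        · rw [if_pos hc]; exact Or.inl rfl
        · rw [if_neg hc]; exact Or.inr rfl
      · rintro (rfl | rfl)
        · obtain ⟨x, hx, hχ⟩ := h3 m1 hm1B
          exact ⟨x, hx, by rw [hpick x hx, if_pos hχ]⟩
        · obtain ⟨x, hx, hχ⟩ := h3 m2 (Finset.mem_of_mem_erase hm2B)
          exact ⟨x, hx, by rw [hpick x hx, if_neg (by rw [hχ]; exact hm2ne)]⟩
    rw [hmenu, himg]
    exact Set.ncard_pair hm2ne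
end

section
/- Under a serial dictatorship with agent order 1, …, n and resulting assignment μ at profile R, if agent 1 instead reports object μ_m (the object originally assigned to agent m) as most preferred while all other agents' preferences are unchanged, the new assignment μ' satisfies: μ'_1 = μ_m; along a uniquely determined cycle of agents γ^{(0)}(m)=m, γ^{(1)}(m), …, γ^{(T)}(m)=1, each agent γ^{(t)}(m) (t < T) receives μ_{γ^{(t+1)}(m)}; and every agent outside this cycle keeps her original object. Consequently, for every j ≠ 1, the set of objects j can receive as agent 1's report varies is exactly {μ_j, μ_{γ(j)}}, of cardinality 2. -/
noncomputable section
open scoped Classical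

/- Agents and objects are `Fin n`; agent `1` of the paper is `⟨0, hn⟩`.  A strict
preference is a ranking `σ : Fin n ≃ Fin n`, with `x ≻ y ↔ σ x < σ y`.  `μ` is the
original serial-dictatorship assignment. -/

/-- The upgrading chain: `w 0 = 1` and
`w (t+1) = min {i > w t : i prefers μ (w t) to μ i}` (stalling once the set is
empty, which does not change the set of values of the chain). -/
def wchain {n : ℕ} (hn : 0 < n) (R : Fin n → (Fin n ≃ Fin n)) (μ : Fin n ≃ Fin n) :
    ℕ → Fin n
  | 0 => ⟨0, hn⟩
  | t + 1 =>
      let p := wchain hn R μ t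
      let s := Finset.univ.filter fun i : Fin n => p < i ∧ (R i) (μ p) < (R i) (μ i)
      if h : s.Nonempty then s.min' h else p

/-- `W i = max {w s : w s < i}` (the strictly increasing chain has at most `n+1`
distinct values, so indices `s ≤ n` suffice). -/
def Wup {n : ℕ} (hn : 0 < n) (R : Fin n → (Fin n ≃ Fin n)) (μ : Fin n ≃ Fin n)
    (i : Fin n) : Fin n :=
  let s := ((Finset.range (n + 1)).image (wchain hn R μ)).filter (· < i)
  if h : s.Nonempty then s.max' h else ⟨0, hn⟩

/-- `v i` is the original owner of `i`'s most preferred object among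
`{μ k : k > i}`. -/
def vdown {n : ℕ} (R : Fin n → (Fin n ≃ Fin n)) (μ : Fin n ≃ Fin n) (i : Fin n) :
    Fin n :=
  let s := Finset.univ.filter fun k : Fin n => i < k
  if h : s.Nonempty then
    (Finset.exists_min_image s (fun k => ((R i) (μ k) : ℕ)) h).choose
  else i

/-- `γ i = W i` if `i` prefers `μ (W i)` to `μ k` for every `k > i`, else
`γ i = v i`. -/
def gam {n : ℕ} (hn : 0 < n) (R : Fin n → (Fin n ≃ Fin n)) (μ : Fin n ≃ Fin n)
    (i : Fin n) : Fin n :=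
  if ∀ k : Fin n, i < k → (R i) (μ (Wup hn R μ i)) < (R i) (μ k) then Wup hn R μ i
  else vdown R μ i

namespace Aux19
variable {n : ℕ} (hn : 0 < n) (R : Fin n → (Fin n ≃ Fin n)) (μ : Fin n ≃ Fin n)

lemma wchain_succ_cases (t : ℕ) :
    (wchain hn R μ (t+1) = wchain hn R μ t ∧
      ∀ i : Fin n, wchain hn R μ t < i → ¬ (R i) (μ (wchain hn R μ t)) < (R i) (μ i)) ∨
    (wchain hn R μ t < wchain hn R μ (t+1) ∧
      (R (wchain hn R μ (t+1))) (μ (wchain hn R μ t)) < (R (wchain hn R μ (t+1))) (μ (wchain hn R μ (t+1))) ∧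
      ∀ i : Fin n, wchain hn R μ t < i → (R i) (μ (wchain hn R μ t)) < (R i) (μ i) →
        wchain hn R μ (t+1) ≤ i) := by
  set p := wchain hn R μ t with hp
  set s := Finset.univ.filter (fun i : Fin n => p < i ∧ (R i) (μ p) < (R i) (μ i)) with hs
  have hdef : wchain hn R μ (t+1) = if h : s.Nonempty then s.min' h else p := rfl
  by_cases h : s.Nonempty
  · right
    rw [hdef, dif_pos h]
    have hmem := Finset.mem_filter.mp (s.min'_mem h)
    refine ⟨hmem.2.1, hmem.2.2, ?_⟩
    intro i h1 h2
    exact s.min'_le i (Finset.mem_filter.mpr ⟨Finset.mem_univ _, h1, h2⟩)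
  · left
    rw [hdef, dif_neg h]
    refine ⟨rfl, ?_⟩
    intro i h1 h2
    exact h ⟨i, Finset.mem_filter.mpr ⟨Finset.mem_univ _, h1, h2⟩⟩

lemma wchain_mono_succ (t : ℕ) : wchain hn R μ t ≤ wchain hn R μ (t+1) := by
  rcases wchain_succ_cases hn R μ t with h | h
  · exact le_of_eq h.1.symm
  · exact le_of_lt h.1

lemma wchain_mono : ∀ {u v : ℕ}, u ≤ v → wchain hn R μ u ≤ wchain hn R μ v := by
  intro u v huv
  induction v with
  | zero => cases Nat.le_zero.mp huv; exact le_refl _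
  | succ v ih =>
    rcases Nat.le_succ_iff.mp huv with h | h
    · exact le_trans (ih h) (wchain_mono_succ hn R μ v)
    · cases h; exact le_refl _

lemma wchain_stall_forward {t : ℕ} (h : wchain hn R μ (t+1) = wchain hn R μ t) :
    ∀ u, t ≤ u → wchain hn R μ u = wchain hn R μ t := by
  have hno : ∀ i : Fin n, wchain hn R μ t < i → ¬ (R i) (μ (wchain hn R μ t)) < (R i) (μ i) := by
    rcases wchain_succ_cases hn R μ t with h2 | h2
    · exact h2.2
    · exact absurd h (ne_of_gt h2.1)
  intro u hu
  induction u with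
  | zero => cases Nat.le_zero.mp hu; rfl
  | succ u ih =>
    rcases Nat.le_succ_iff.mp hu with h3 | h3
    · have heq := ih h3
      rcases wchain_succ_cases hn R μ u with h4 | h4
      · rw [h4.1, heq]
      · exfalso
        exact hno _ (heq ▸ h4.1) (by rw [← heq]; exact h4.2.1)
    · cases h3; rfl

/-- there is a stall index `≤ n`. -/
lemma wchain_exists_stall : ∃ t, t ≤ n ∧ wchain hn R μ (t+1) = wchain hn R μ t := by
  by_contra hcon
  push_neg at hcon
  have hstrict : ∀ t, t ≤ n + 1 → t ≤ (wchain hn R μ t : ℕ) := by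
    intro t
    induction t with
    | zero => intro _; exact Nat.zero_le _
    | succ t ih =>
      intro ht
      have h1 := ih (Nat.le_of_succ_le ht)
      have h2 : wchain hn R μ t < wchain hn R μ (t+1) := by
        rcases wchain_succ_cases hn R μ t with h | h
        · exact absurd h.1 (hcon t (Nat.lt_succ_iff.mp ht))
        · exact h.1
      have := Fin.lt_def.mp h2
      omega
  have := hstrict n (Nat.le_succ n)
  have := (wchain hn R μ n).isLt
  omega

def stallT : ℕ := Nat.find (⟨(wchain_exists_stall hn R μ).choose,
  (wchain_exists_stall hn R μ).choose_spec.2⟩ : ∃ t, wchain hn R μ (t+1) = wchain hn R μ t)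

lemma stallT_le : stallT hn R μ ≤ n := by
  have h := (wchain_exists_stall hn R μ).choose_spec
  exact le_trans (Nat.find_le h.2) h.1

lemma stallT_stall : wchain hn R μ (stallT hn R μ + 1) = wchain hn R μ (stallT hn R μ) :=
  Nat.find_spec (⟨(wchain_exists_stall hn R μ).choose,
    (wchain_exists_stall hn R μ).choose_spec.2⟩ : ∃ t, wchain hn R μ (t+1) = wchain hn R μ t)

lemma wchain_strict_before {t : ℕ} (h : t < stallT hn R μ) :
    wchain hn R μ t < wchain hn R μ (t+1) := by
  rcases wchain_succ_cases hn R μ t with h2 | h2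
  · exact absurd h2.1 (Nat.find_min _ h)
  · exact h2.1

/-- every chain value is attained at an index `≤ stallT`. -/
lemma wchain_repr {u : ℕ} : ∃ s, s ≤ stallT hn R μ ∧ wchain hn R μ s = wchain hn R μ u := by
  by_cases h : u ≤ stallT hn R μ
  · exact ⟨u, h, rfl⟩
  · push_neg at h
    exact ⟨stallT hn R μ, le_refl _,
      (wchain_stall_forward hn R μ (stallT_stall hn R μ) u (le_of_lt h)).symm⟩

lemma fin_zero_lt {j : Fin n} (hj : j ≠ ⟨0, hn⟩) : (⟨0, hn⟩ : Fin n) < j := by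
  rw [Fin.lt_def]
  simp only [Ne, Fin.ext_iff] at hj
  exact Nat.pos_of_ne_zero hj

lemma Wup_nonempty {j : Fin n} (hj : j ≠ ⟨0, hn⟩) :
    ((((Finset.range (n + 1)).image (wchain hn R μ))).filter (· < j)).Nonempty := by
  refine ⟨⟨0, hn⟩, Finset.mem_filter.mpr ⟨?_, fin_zero_lt hn hj⟩⟩
  exact Finset.mem_image.mpr ⟨0, Finset.mem_range.mpr (Nat.succ_pos n), rfl⟩

lemma Wup_eq {j : Fin n} (hj : j ≠ ⟨0, hn⟩) :
    Wup hn R μ j = ((((Finset.range (n + 1)).image (wchain hn R μ))).filter (· < j)).max'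
      (Wup_nonempty hn R μ hj) := by
  have : Wup hn R μ j = if h : ((((Finset.range (n + 1)).image (wchain hn R μ))).filter (· < j)).Nonempty
      then ((((Finset.range (n + 1)).image (wchain hn R μ))).filter (· < j)).max' h else ⟨0, hn⟩ := rfl
  rw [this, dif_pos (Wup_nonempty hn R μ hj)]

lemma Wup_lt {j : Fin n} (hj : j ≠ ⟨0, hn⟩) : Wup hn R μ j < j := by
  have h := Finset.max'_mem _ (Wup_nonempty hn R μ hj)
  rw [← Wup_eq hn R μ hj] at h
  exact (Finset.mem_filter.mp h).2

lemma Wup_mem_chain {j : Fin n} (hj : j ≠ ⟨0, hn⟩) :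
    Wup hn R μ j ∈ (Finset.range (n + 1)).image (wchain hn R μ) := by
  have h := Finset.max'_mem _ (Wup_nonempty hn R μ hj)
  rw [← Wup_eq hn R μ hj] at h
  exact (Finset.mem_filter.mp h).1

lemma Wup_max {j y : Fin n} (hj : j ≠ ⟨0, hn⟩)
    (hy : y ∈ (Finset.range (n + 1)).image (wchain hn R μ)) (hyj : y < j) :
    y ≤ Wup hn R μ j := by
  have hmem : y ∈ (((Finset.range (n + 1)).image (wchain hn R μ))).filter (· < j) :=
    Finset.mem_filter.mpr ⟨hy, hyj⟩
  rw [Wup_eq hn R μ hj]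
  exact Finset.le_max' _ _ hmem

lemma stall_no : ∀ i : Fin n, wchain hn R μ (stallT hn R μ) < i →
    ¬ (R i) (μ (wchain hn R μ (stallT hn R μ))) < (R i) (μ i) := by
  rcases wchain_succ_cases hn R μ (stallT hn R μ) with h | h
  · exact h.2
  · exact absurd (stallT_stall hn R μ) (ne_of_gt h.1)

lemma chain_repr_le {x : Fin n} (hx : x ∈ (Finset.range (n + 1)).image (wchain hn R μ)) :
    ∃ s, s ≤ stallT hn R μ ∧ wchain hn R μ s = x := by
  obtain ⟨u, _, hu⟩ := Finset.mem_image.mp hx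
  obtain ⟨s, hs1, hs2⟩ := wchain_repr hn R μ (u := u)
  exact ⟨s, hs1, hs2.trans hu⟩

lemma Kmax {j : Fin n} (hj : j ≠ ⟨0, hn⟩) (i : Fin n) (h1 : Wup hn R μ j < i) (h2 : i < j) :
    ¬ (R i) (μ (Wup hn R μ j)) < (R i) (μ i) := by
  intro hcond
  obtain ⟨s, hs1, hs2⟩ := chain_repr_le hn R μ (Wup_mem_chain hn R μ hj)
  rcases eq_or_lt_of_le hs1 with heq | hlt
  · subst heq
    exact stall_no hn R μ i (hs2 ▸ h1) (by rw [hs2]; exact hcond) 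
  · rcases wchain_succ_cases hn R μ s with h | h
    · exact absurd h.1 (Nat.find_min _ hlt)
    · have hle : wchain hn R μ (s+1) ≤ i := h.2.2 i (hs2 ▸ h1) (by rw [hs2]; exact hcond)
      have hmem : wchain hn R μ (s+1) ∈ (Finset.range (n + 1)).image (wchain hn R μ) :=
        Finset.mem_image.mpr ⟨s+1, Finset.mem_range.mpr (by
          have := stallT_le hn R μ; omega), rfl⟩
      have := Wup_max hn R μ hj hmem (lt_of_le_of_lt hle h2)
      rw [← hs2] at this
      exact absurd this (not_le.mpr h.1)

lemma chain_cond {x : Fin n} (hx : x ∈ (Finset.range (n + 1)).image (wchain hn R μ))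
    (hxz : x ≠ ⟨0, hn⟩) : (R x) (μ (Wup hn R μ x)) < (R x) (μ x) := by
  obtain ⟨s, hs1, hs2⟩ := chain_repr_le hn R μ hx
  have hex : ∃ u, wchain hn R μ u = x := ⟨s, hs2⟩
  have hfs : wchain hn R μ (Nat.find hex) = x := Nat.find_spec hex
  have hs1le : Nat.find hex ≤ stallT hn R μ := le_trans (Nat.find_le hs2) hs1
  have hs1pos : Nat.find hex ≠ 0 := by
    intro h0
    rw [h0] at hfs
    exact hxz hfs.symm
  obtain ⟨s2, hs12⟩ : ∃ s2, Nat.find hex = s2 + 1 := ⟨Nat.find hex - 1, by omega⟩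
  rw [hs12] at hfs hs1le
  have hstrict : wchain hn R μ s2 < wchain hn R μ (s2+1) :=
    wchain_strict_before hn R μ (by omega)
  have hcond : (R x) (μ (wchain hn R μ s2)) < (R x) (μ x) := by
    rcases wchain_succ_cases hn R μ s2 with h | h
    · exact absurd h.1 (ne_of_gt hstrict)
    · rw [← hfs]; exact h.2.1
  have hWeq : Wup hn R μ x = wchain hn R μ s2 := by
    have hle1 : wchain hn R μ s2 ≤ Wup hn R μ x := by
      refine Wup_max hn R μ hxz ?_ (hfs ▸ hstrict)
      exact Finset.mem_image.mpr ⟨s2, Finset.mem_range.mpr (by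
        have := stallT_le hn R μ; omega), rfl⟩
    have hle2 : Wup hn R μ x ≤ wchain hn R μ s2 := by
      obtain ⟨u, hu1, hu2⟩ := chain_repr_le hn R μ (Wup_mem_chain hn R μ hxz)
      rcases le_or_gt u s2 with h | h
      · rw [← hu2]; exact wchain_mono hn R μ h
      · exfalso
        have : x ≤ wchain hn R μ u := by
          rw [← hfs]; exact wchain_mono hn R μ h
        rw [hu2] at this
        exact absurd (Wup_lt hn R μ hxz) (not_lt.mpr this)
    exact le_antisymm hle2 hle1
  rw [hWeq]
  exact hcond

lemma vdown_spec {i : Fin n} (h : (Finset.univ.filter fun k : Fin n => i < k).Nonempty) :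
    i < vdown R μ i ∧ ∀ k : Fin n, i < k → ((R i) (μ (vdown R μ i)) : ℕ) ≤ (R i) (μ k) := by
  have hdef : vdown R μ i = if h : (Finset.univ.filter fun k : Fin n => i < k).Nonempty then
      (Finset.exists_min_image _ (fun k => ((R i) (μ k) : ℕ)) h).choose else i := rfl
  rw [hdef, dif_pos h]
  obtain ⟨hmem, hmin⟩ := (Finset.exists_min_image
    (Finset.univ.filter fun k : Fin n => i < k) (fun k => ((R i) (μ k) : ℕ)) h).choose_spec
  refine ⟨(Finset.mem_filter.mp hmem).2, ?_⟩
  intro k hk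
  exact hmin k (Finset.mem_filter.mpr ⟨Finset.mem_univ _, hk⟩)

lemma gam_cases (j : Fin n) :
    (gam hn R μ j = Wup hn R μ j ∧
      ∀ k : Fin n, j < k → (R j) (μ (Wup hn R μ j)) < (R j) (μ k)) ∨
    (gam hn R μ j = vdown R μ j ∧ j < vdown R μ j ∧
      (∀ k : Fin n, j < k → ((R j) (μ (vdown R μ j)) : ℕ) ≤ (R j) (μ k)) ∧
      ((R j) (μ (vdown R μ j)) : ℕ) ≤ (R j) (μ (Wup hn R μ j)) ∧
      ¬ ∀ k : Fin n, j < k → (R j) (μ (Wup hn R μ j)) < (R j) (μ k)) := by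
  by_cases hc : ∀ k : Fin n, j < k → (R j) (μ (Wup hn R μ j)) < (R j) (μ k)
  · exact Or.inl ⟨by rw [gam, if_pos hc], hc⟩
  · push_neg at hc
    obtain ⟨k0, hk01, hk02⟩ := hc
    have hne : (Finset.univ.filter fun k : Fin n => j < k).Nonempty :=
      ⟨k0, Finset.mem_filter.mpr ⟨Finset.mem_univ _, hk01⟩⟩
    obtain ⟨hv1, hv2⟩ := vdown_spec R μ hne
    refine Or.inr ⟨?_, hv1, hv2, le_trans (hv2 k0 hk01) (Fin.le_def.mp hk02), ?_⟩
    · rw [gam, if_neg]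
      push_neg
      exact ⟨k0, hk01, hk02⟩
    · push_neg
      exact ⟨k0, hk01, hk02⟩

lemma chain_reach
    (hsd : ∀ i k : Fin n, i ≤ k → ((R i) (μ i) : ℕ) ≤ ((R i) (μ k) : ℕ)) :
    ∀ N : ℕ, ∀ x : Fin n, x.val < N →
      x ∈ (Finset.range (n + 1)).image (wchain hn R μ) →
      ∃ t, (gam hn R μ)^[t] x = ⟨0, hn⟩ := by
  intro N
  induction N with
  | zero => intro x hx; omega
  | succ N ih =>
    intro x hx hmem
    by_cases hxz : x = ⟨0, hn⟩
    · exact ⟨0, hxz⟩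
    · have hcond := chain_cond hn R μ hmem hxz
      have hbr : gam hn R μ x = Wup hn R μ x := by
        rw [gam, if_pos]
        intro k hk
        rw [Fin.lt_def]
        rw [Fin.lt_def] at hcond
        exact lt_of_lt_of_le hcond (hsd x k (le_of_lt hk))
      have hlt := Fin.lt_def.mp (Wup_lt hn R μ hxz)
      obtain ⟨t, ht⟩ := ih (Wup hn R μ x) (by omega) (Wup_mem_chain hn R μ hxz)
      exact ⟨t + 1, by rw [Function.iterate_succ_apply, hbr, ht]⟩

lemma exists_reach
    (hsd : ∀ i k : Fin n, i ≤ k → ((R i) (μ i) : ℕ) ≤ ((R i) (μ k) : ℕ)) :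
    ∀ d : ℕ, ∀ m : Fin n, n - m.val ≤ d → ∃ t, (gam hn R μ)^[t] m = ⟨0, hn⟩ := by
  intro d
  induction d with
  | zero => intro m hm; have := m.isLt; omega
  | succ d ih =>
    intro m hm
    by_cases hmz : m = ⟨0, hn⟩
    · exact ⟨0, hmz⟩
    · rcases gam_cases hn R μ m with hW | hV
      · obtain ⟨t, ht⟩ := chain_reach hn R μ hsd n (Wup hn R μ m)
          (Fin.lt_def.mp (Wup_lt hn R μ hmz) |>.trans_le (le_of_lt m.isLt))
          (Wup_mem_chain hn R μ hmz)
        exact ⟨t + 1, by rw [Function.iterate_succ_apply, hW.1, ht]⟩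
      · have hlt := Fin.lt_def.mp hV.2.1
        obtain ⟨t, ht⟩ := ih (vdown R μ m) (by have := (vdown R μ m).isLt; omega)
        exact ⟨t + 1, by rw [Function.iterate_succ_apply, hV.1, ht]⟩

lemma SDmu (φ : (Fin n → (Fin n ≃ Fin n)) → (Fin n ≃ Fin n))
    (hSD : ∀ (R : Fin n → (Fin n ≃ Fin n)) (i o : Fin n),
      (∀ j < i, φ R j ≠ o) → ((R i) (φ R i) : ℕ) ≤ (R i) o)
    (hμ : μ = φ R) : ∀ i k : Fin n, i ≤ k → ((R i) (μ i) : ℕ) ≤ ((R i) (μ k) : ℕ) := by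
  intro i k hik
  have h := hSD R i (μ k) ?_
  · rwa [← hμ] at h
  · intro j hj heq
    rw [← hμ] at heq
    cases μ.injective heq
    exact absurd hj (not_lt.mpr hik)

lemma main_assign (φ : (Fin n → (Fin n ≃ Fin n)) → (Fin n ≃ Fin n))
    (hSD : ∀ (R : Fin n → (Fin n ≃ Fin n)) (i o : Fin n),
      (∀ j < i, φ R j ≠ o) → ((R i) (φ R i) : ℕ) ≤ (R i) o)
    (hμ : μ = φ R) (m : Fin n) (r' : Fin n ≃ Fin n)
    (hr' : ∀ o : Fin n, o ≠ μ m → r' (μ m) < r' o)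
    (hex : ∃ t, (gam hn R μ)^[t] m = ⟨0, hn⟩) :
    ∀ j : Fin n, φ (Function.update R ⟨0, hn⟩ r') j =
      if j = ⟨0, hn⟩ then μ m
      else if ∃ t, t < Nat.find hex ∧ (gam hn R μ)^[t] m = j then μ (gam hn R μ j)
      else μ j := by
  have hsd := SDmu R μ φ hSD hμ
  set T := Nat.find hex with hT
  set c : ℕ → Fin n := fun t => (gam hn R μ)^[t] m with hc
  set ν : Fin n → Fin n := fun j =>
    if j = ⟨0, hn⟩ then μ m
    else if ∃ t, t < T ∧ c t = j then μ (gam hn R μ j) else μ j with hν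
  have hcT : c T = ⟨0, hn⟩ := Nat.find_spec hex
  have hcmin : ∀ t, t < T → c t ≠ ⟨0, hn⟩ := fun t ht => Nat.find_min hex ht
  have hcsucc : ∀ t, c (t + 1) = gam hn R μ (c t) := fun t =>
    Function.iterate_succ_apply' (gam hn R μ) t m
  -- injectivity of `c` on `[0, T]`
  have cInj : ∀ a b, a ≤ T → b ≤ T → c a = c b → a = b := by
    have key : ∀ a b, a < b → b ≤ T → c a ≠ c b := by
      intro a b hab hbT heq
      have hper : ∀ r, c (r + b) = c (r + a) := by
        intro r
        simp only [hc, Function.iterate_add_apply]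
        rw [show (gam hn R μ)^[b] m = (gam hn R μ)^[a] m from heq.symm]
      have hper2 : ∀ q r, c (r + a + q * (b - a)) = c (r + a) := by
        intro q
        induction q with
        | zero => intro r; simp
        | succ q ihq =>
          intro r
          have h1 : r + a + (q + 1) * (b - a) = (r + q * (b - a)) + b := by
            have : a + (b - a) = b := by omega
            ring_nf
            omega
          rw [h1, hper (r + q * (b - a))]
          have h2 : r + q * (b - a) + a = r + a + q * (b - a) := by ring
          rw [h2, ihq r]
      have hd : 0 < b - a := by omega
      have hdiv := Nat.div_add_mod (T - a) (b - a)
      set q := (T - a) / (b - a) with hqdef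
      set r0 := (T - a) % (b - a) with hr0def
      have hr0 : r0 < b - a := Nat.mod_lt _ hd
      have hqd : q * (b - a) = (b - a) * q := Nat.mul_comm _ _
      rcases Nat.eq_zero_or_pos q with hq0 | hq0
      · rw [hq0] at hdiv
        simp at hdiv
        omega
      · have hge : b - a ≤ q * (b - a) := Nat.le_mul_of_pos_left (b - a) hq0
        have hTeq : T = r0 + a + q * (b - a) := by omega
        have hthis := hper2 q r0
        rw [← hTeq] at hthis
        have hlt : r0 + a < T := by omega
        exact hcmin (r0 + a) hlt (by rw [← hthis, hcT])
    intro a b haT hbT heq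
    rcases lt_trichotomy a b with h | h | h
    · exact absurd heq (key a b h hbT)
    · exact h
    · exact absurd heq.symm (key b a h haT)
  -- ν as μ ∘ π
  set π : Fin n → Fin n := fun j =>
    if j = ⟨0, hn⟩ then m
    else if ∃ t, t < T ∧ c t = j then gam hn R μ j else j with hπ
  have hνπ : ∀ j, ν j = μ (π j) := by
    intro j
    simp only [hν, hπ]
    split_ifs <;> rfl
  have hπcyc : ∀ j, (j = ⟨0, hn⟩ ∨ ∃ t, t < T ∧ c t = j) →
      ∃ u, u ≤ T ∧ π j = c u ∧ ((j = ⟨0, hn⟩ ∧ u = 0) ∨ ∃ t, t < T ∧ c t = j ∧ u = t + 1) := by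
    intro j hj
    rcases hj with hjz | ⟨t, ht, hct⟩
    · refine ⟨0, Nat.zero_le _, ?_, Or.inl ⟨hjz, rfl⟩⟩
      simp only [hπ, if_pos hjz]
      rfl
    · refine ⟨t + 1, ht, ?_, Or.inr ⟨t, ht, hct, rfl⟩⟩
      have hjz : j ≠ ⟨0, hn⟩ := hct ▸ hcmin t ht
      simp only [hπ, if_neg hjz, if_pos (⟨t, ht, hct⟩ : ∃ t', t' < T ∧ c t' = j)]
      rw [← hct, ← hcsucc]
  have hπout : ∀ j, ¬ (j = ⟨0, hn⟩ ∨ ∃ t, t < T ∧ c t = j) →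
      π j = j ∧ ∀ u, u ≤ T → c u ≠ j := by
    intro j hj
    push_neg at hj
    constructor
    · simp only [hπ, if_neg hj.1]
      rw [if_neg]
      push_neg
      intro t ht
      exact hj.2 t ht
    · intro u hu hcu
      rcases eq_or_lt_of_le hu with rfl | hu'
      · exact hj.1 (by rw [← hcu, hcT])
      · exact hj.2 u hu' hcu
  have πinj : Function.Injective π := by
    intro a b heq
    by_cases ha : a = ⟨0, hn⟩ ∨ ∃ t, t < T ∧ c t = a <;>
      by_cases hb : b = ⟨0, hn⟩ ∨ ∃ t, t < T ∧ c t = b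
    · obtain ⟨ua, hua, hπa, hka⟩ := hπcyc a ha
      obtain ⟨ub, hub, hπb, hkb⟩ := hπcyc b hb
      have huab : ua = ub := cInj ua ub hua hub (by rw [← hπa, ← hπb, heq])
      rcases hka with ⟨haz, hua0⟩ | ⟨ta, hta, hcta, huat⟩ <;>
        rcases hkb with ⟨hbz, hub0⟩ | ⟨tb, htb, hctb, hubt⟩
      · rw [haz, hbz]
      · omega
      · omega
      · have : ta = tb := by omega
        rw [← hcta, ← hctb, this]
    · obtain ⟨ua, hua, hπa, _⟩ := hπcyc a ha
      exact absurd (hπa.symm.trans heq)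
        (by rw [(hπout b hb).1]; exact (hπout b hb).2 ua hua)
    · obtain ⟨ub, hub, hπb, _⟩ := hπcyc b hb
      exact absurd (heq.trans hπb)
        (by rw [(hπout a ha).1]; exact fun h => (hπout a ha).2 ub hub h.symm)
    · rw [(hπout a ha).1, (hπout b hb).1] at heq
      exact heq
  have νinj : Function.Injective ν := by
    intro a b heq
    rw [hνπ, hνπ] at heq
    exact πinj (μ.injective heq)
  have νsurj : Function.Surjective ν := Finite.injective_iff_surjective.mp νinj
  -- evaluation lemmas for ν
  have hνz : ν ⟨0, hn⟩ = μ m := by simp only [hν, if_pos rfl]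
  have hνin : ∀ j, j ≠ ⟨0, hn⟩ → (∃ t, t < T ∧ c t = j) → ν j = μ (gam hn R μ j) := by
    intro j h1 h2
    simp only [hν, if_neg h1, if_pos h2]
  have hνout : ∀ j, j ≠ ⟨0, hn⟩ → (¬ ∃ t, t < T ∧ c t = j) → ν j = μ j := by
    intro j h1 h2
    simp only [hν, if_neg h1, if_neg h2]
  -- classification of descending γ-steps
  have hclass : ∀ k : Fin n, gam hn R μ k < k →
      gam hn R μ k = Wup hn R μ k ∧
      ∀ k' : Fin n, k < k' → (R k) (μ (Wup hn R μ k)) < (R k) (μ k') := by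
    intro k hlt
    rcases gam_cases hn R μ k with h | h
    · exact ⟨h.1, h.2⟩
    · exact absurd (h.1 ▸ hlt) (not_lt.mpr (le_of_lt h.2.1))
  -- the greedy property of ν under the updated profile
  have hgreedy : ∀ i k : Fin n, i ≤ k →
      (((Function.update R ⟨0, hn⟩ r') i) (ν i) : ℕ) ≤
        ((Function.update R ⟨0, hn⟩ r') i) (ν k) := by
    intro i k hik
    by_cases hiz : i = ⟨0, hn⟩
    · subst hiz
      rw [Function.update_self, hνz]
      by_cases h : ν k = μ m
      · rw [h]
      · exact le_of_lt (Fin.lt_def.mp (hr' _ h))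
    · rw [Function.update_of_ne hiz]
      have hkz : k ≠ ⟨0, hn⟩ := by
        intro hk
        exact absurd (hk ▸ hik) (not_le.mpr (fin_zero_lt hn hiz))
      by_cases hicyc : ∃ t, t < T ∧ c t = i
      · -- i is on the cycle
        rw [hνin i hiz hicyc]
        rcases eq_or_lt_of_le hik with rfl | hik'
        · rw [hνin i hiz hicyc]
        · have hνk : ν k = μ (gam hn R μ k) ∨ ν k = μ k := by
            by_cases hkcyc : ∃ t, t < T ∧ c t = k
            · exact Or.inl (hνin k hkz hkcyc)
            · exact Or.inr (hνout k hkz hkcyc)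
          rcases gam_cases hn R μ i with hWi | hVi
          · -- W-branch at i
            rw [hWi.1]
            rcases hνk with hνk | hνk <;> rw [hνk]
            · rcases lt_trichotomy i (gam hn R μ k) with hq | hq | hq
              · exact le_of_lt (Fin.lt_def.mp (hWi.2 _ hq))
              · -- γ k = i
                have hγklt : gam hn R μ k < k := hq ▸ hik'
                have hcl := hclass k hγklt
                have hichain : i ∈ (Finset.range (n + 1)).image (wchain hn R μ) := by
                  rw [hq, hcl.1]
                  exact Wup_mem_chain hn R μ hkz
                have hcc := chain_cond hn R μ hichain hiz
                rw [← hq]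
                exact le_of_lt (Fin.lt_def.mp hcc)
              · -- γ k < i < k
                have hcl := hclass k (lt_trans hq hik')
                have hWeq : Wup hn R μ k = Wup hn R μ i := by
                  refine le_antisymm ?_ ?_
                  · exact Wup_max hn R μ hiz (Wup_mem_chain hn R μ hkz) (hcl.1 ▸ hq)
                  · exact Wup_max hn R μ hkz (Wup_mem_chain hn R μ hiz)
                      (lt_trans (Wup_lt hn R μ hiz) hik')
                rw [hcl.1, hWeq]
            · exact le_of_lt (Fin.lt_def.mp (hWi.2 k hik'))
          · -- v-branch at i
            rw [hVi.1]
            rcases hνk with hνk | hνk <;> rw [hνk]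
            · rcases lt_trichotomy i (gam hn R μ k) with hq | hq | hq
              · exact hVi.2.2.1 _ hq
              · -- γ k = i : contradiction with v-branch
                exfalso
                have hγklt : gam hn R μ k < k := hq ▸ hik'
                have hcl := hclass k hγklt
                have hichain : i ∈ (Finset.range (n + 1)).image (wchain hn R μ) := by
                  rw [hq, hcl.1]
                  exact Wup_mem_chain hn R μ hkz
                have hcc := chain_cond hn R μ hichain hiz
                refine hVi.2.2.2.2 ?_
                intro k' hk'
                rw [Fin.lt_def]
                exact lt_of_lt_of_le (Fin.lt_def.mp hcc) (hsd i k' (le_of_lt hk'))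
              · -- γ k < i < k
                have hcl := hclass k (lt_trans hq hik')
                have hWeq : Wup hn R μ k = Wup hn R μ i := by
                  refine le_antisymm ?_ ?_
                  · exact Wup_max hn R μ hiz (Wup_mem_chain hn R μ hkz) (hcl.1 ▸ hq)
                  · exact Wup_max hn R μ hkz (Wup_mem_chain hn R μ hiz)
                      (lt_trans (Wup_lt hn R μ hiz) hik')
                rw [hcl.1, hWeq]
                exact hVi.2.2.2.1
            · exact hVi.2.2.1 k hik'
      · -- i is not on the cycle
        rw [hνout i hiz hicyc]
        by_cases hkcyc : ∃ t, t < T ∧ c t = k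
        · rw [hνin k hkz hkcyc]
          rcases gam_cases hn R μ k with hWk | hVk
          · rcases le_or_gt i (Wup hn R μ k) with h | h
            · rw [hWk.1]; exact hsd i _ h
            · have hik' : i < k := lt_of_le_of_ne hik (fun he => hicyc (he ▸ hkcyc))
              have := Kmax hn R μ hkz i h hik'
              rw [hWk.1]
              exact Fin.le_def.mp (not_lt.mp this)
          · rw [hVk.1]
            exact hsd i _ (le_trans hik (le_of_lt hVk.2.1))
        · rw [hνout k hkz hkcyc]
          exact hsd i k hik
  -- conclude by strong induction that φ R' = ν
  intro j0
  suffices H : ∀ N : ℕ, ∀ j : Fin n, j.val < N →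
      φ (Function.update R ⟨0, hn⟩ r') j = ν j by
    exact H n j0 j0.isLt
  intro N
  induction N with
  | zero => intro j hj; omega
  | succ N ih =>
    intro j hj
    rcases Nat.lt_succ_iff_lt_or_eq.mp hj with h | h
    · exact ih j h
    · have ihj : ∀ j' : Fin n, j' < j → φ (Function.update R ⟨0, hn⟩ r') j' = ν j' := by
        intro j' hj'
        exact ih j' (by rw [← h]; exact Fin.lt_def.mp hj')
      have h1 : (((Function.update R ⟨0, hn⟩ r') j) ((φ (Function.update R ⟨0, hn⟩ r')) j) : ℕ) ≤
          ((Function.update R ⟨0, hn⟩ r') j) (ν j) := by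
        apply hSD
        intro j' hj' heq
        rw [ihj j' hj'] at heq
        exact (ne_of_lt hj') (νinj heq)
      have h2 : (((Function.update R ⟨0, hn⟩ r') j) (ν j) : ℕ) ≤
          ((Function.update R ⟨0, hn⟩ r') j) ((φ (Function.update R ⟨0, hn⟩ r')) j) := by
        obtain ⟨k, hk⟩ := νsurj ((φ (Function.update R ⟨0, hn⟩ r')) j)
        have hjk : j ≤ k := by
          by_contra hcon
          push_neg at hcon
          have hh := ihj k hcon
          rw [hk] at hh
          exact (ne_of_lt hcon) ((φ (Function.update R ⟨0, hn⟩ r')).injective hh)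
        have := hgreedy j k hjk
        rwa [hk] at this
      exact ((Function.update R ⟨0, hn⟩ r') j).injective
        (Fin.val_injective (le_antisymm h1 h2))

end Aux19

/-- let `φ` be the serial dictatorship (each agent receives her most
preferred object among those not assigned to earlier agents) and `μ = φ R`.  If agent
`1` instead reports any preference top-ranking `μ m` (the object originally assigned
to agent `m`), the new assignment `μ'` gives `μ m` to agent `1`; along the cycle
`m = γ⁰(m), γ¹(m), …, γᵀ(m) = 1` each agent `γᵗ(m)` (`t < T`) receives
`μ (γᵗ⁺¹(m))`; and every agent outside this cycle keeps her original object.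
Consequently, for every `j ≠ 1`, the set of objects `j` can receive as agent `1`'s
report varies is exactly `{μ j, μ (γ j)}`, of cardinality 2. -/
theorem stmt_19 {n : ℕ} (hn : 0 < n)
    (φ : (Fin n → (Fin n ≃ Fin n)) → (Fin n ≃ Fin n))
    (hSD : ∀ (R : Fin n → (Fin n ≃ Fin n)) (i o : Fin n),
      (∀ j < i, φ R j ≠ o) → ((R i) (φ R i) : ℕ) ≤ (R i) o)
    (R : Fin n → (Fin n ≃ Fin n)) (μ : Fin n ≃ Fin n) (hμ : μ = φ R) :
    (∀ m : Fin n, ∀ r' : Fin n ≃ Fin n,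
      (∀ o : Fin n, o ≠ μ m → r' (μ m) < r' o) →
      φ (Function.update R ⟨0, hn⟩ r') ⟨0, hn⟩ = μ m ∧
      ∃ T : ℕ, (gam hn R μ)^[T] m = ⟨0, hn⟩ ∧
        (∀ t < T, φ (Function.update R ⟨0, hn⟩ r') ((gam hn R μ)^[t] m)
            = μ ((gam hn R μ)^[t + 1] m)) ∧
        (∀ j : Fin n, j ≠ ⟨0, hn⟩ → (∀ t ≤ T, j ≠ (gam hn R μ)^[t] m) →
            φ (Function.update R ⟨0, hn⟩ r') j = μ j)) ∧
    (∀ j : Fin n, j ≠ ⟨0, hn⟩ →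
      {o : Fin n | ∃ r', o = φ (Function.update R ⟨0, hn⟩ r') j}
          = {μ j, μ (gam hn R μ j)} ∧
      Set.ncard {o : Fin n | ∃ r', o = φ (Function.update R ⟨0, hn⟩ r') j} = 2) := by
  have hsd := Aux19.SDmu R μ φ hSD hμ
  constructor
  · intro m r' hr'
    have hex : ∃ t, (gam hn R μ)^[t] m = ⟨0, hn⟩ :=
      Aux19.exists_reach hn R μ hsd n m (by omega)
    have hmain := Aux19.main_assign hn R μ φ hSD hμ m r' hr' hex
    constructor
    · rw [hmain ⟨0, hn⟩, if_pos rfl]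
    · refine ⟨Nat.find hex, Nat.find_spec hex, ?_, ?_⟩
      · intro t ht
        rw [hmain _, if_neg (Nat.find_min hex ht), if_pos ⟨t, ht, rfl⟩]
        congr 1
        exact (Function.iterate_succ_apply' (gam hn R μ) t m).symm
      · intro j hj hout
        rw [hmain j, if_neg hj, if_neg]
        push_neg
        intro t ht
        exact fun hcon => (hout t (le_of_lt ht)) hcon.symm
  · intro j hj
    have hne : μ j ≠ μ (gam hn R μ j) := by
      intro hcon
      have hjj := μ.injective hcon
      rcases Aux19.gam_cases hn R μ j with hW | hV
      · have hlt := Aux19.Wup_lt hn R μ hj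
        rw [← hW.1, ← hjj] at hlt
        exact lt_irrefl _ hlt
      · have hlt := hV.2.1
        rw [hV.1] at hjj
        rw [← hjj] at hlt
        exact lt_irrefl _ hlt
    have hset : {o : Fin n | ∃ r', o = φ (Function.update R ⟨0, hn⟩ r') j}
        = {μ j, μ (gam hn R μ j)} := by
      apply Set.eq_of_subset_of_subset
      · rintro o ⟨r', rfl⟩
        set m := μ.symm (r'.symm ⟨0, hn⟩) with hm
        have hr' : ∀ o' : Fin n, o' ≠ μ m → r' (μ m) < r' o' := by
          intro o' ho'
          have hb : r' (μ m) = ⟨0, hn⟩ := by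
            rw [hm]
            simp
          rw [hb]
          apply Aux19.fin_zero_lt hn
          intro hcon
          apply ho'
          have ho2 : o' = r'.symm ⟨0, hn⟩ := by rw [← hcon]; simp
          rw [ho2, hm]
          simp
        have hex : ∃ t, (gam hn R μ)^[t] m = ⟨0, hn⟩ :=
          Aux19.exists_reach hn R μ hsd n m (by omega)
        have hmain := Aux19.main_assign hn R μ φ hSD hμ m r' hr' hex
        rw [hmain j, if_neg hj]
        by_cases hcyc : ∃ t, t < Nat.find hex ∧ (gam hn R μ)^[t] m = j
        · rw [if_pos hcyc]
          exact Or.inr rfl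
        · rw [if_neg hcyc]
          exact Or.inl rfl
      · rintro o (rfl | rfl)
        · -- value μ j : report top-ranking μ ⟨0,hn⟩
          refine ⟨μ.symm, ?_⟩
          have hr' : ∀ o' : Fin n, o' ≠ μ ⟨0, hn⟩ → μ.symm (μ ⟨0, hn⟩) < μ.symm o' := by
            intro o' ho'
            simp only [Equiv.symm_apply_apply]
            apply Aux19.fin_zero_lt hn
            intro hcon
            apply ho'
            rw [← hcon]
            simp
          have hex : ∃ t, (gam hn R μ)^[t] ⟨0, hn⟩ = ⟨0, hn⟩ := ⟨0, rfl⟩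
          have hmain := Aux19.main_assign hn R μ φ hSD hμ ⟨0, hn⟩ μ.symm hr' hex
          have hT0 : Nat.find hex = 0 := Nat.find_eq_zero hex |>.mpr rfl
          rw [hmain j, if_neg hj, if_neg]
          rw [hT0]
          rintro ⟨t, ht, -⟩
          omega
        · -- value μ (gam j) : report top-ranking μ j
          refine ⟨μ.symm.trans (Equiv.swap j ⟨0, hn⟩), ?_⟩
          set r' : Fin n ≃ Fin n := μ.symm.trans (Equiv.swap j ⟨0, hn⟩) with hr'def
          have hrj : r' (μ j) = ⟨0, hn⟩ := by
            rw [hr'def]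
            simp [Equiv.swap_apply_left]
          have hr' : ∀ o' : Fin n, o' ≠ μ j → r' (μ j) < r' o' := by
            intro o' ho'
            rw [hrj]
            apply Aux19.fin_zero_lt hn
            intro hcon
            apply ho'
            have : r' o' = r' (μ j) := by rw [hrj, hcon]
            have := r'.injective this
            exact this
          have hex : ∃ t, (gam hn R μ)^[t] j = ⟨0, hn⟩ :=
            Aux19.exists_reach hn R μ hsd n j (by omega)
          have hmain := Aux19.main_assign hn R μ φ hSD hμ j r' hr' hex
          have hTpos : 0 < Nat.find hex := by
            rcases Nat.eq_zero_or_pos (Nat.find hex) with h0 | h0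
            · exfalso
              have := Nat.find_spec hex
              rw [h0] at this
              exact hj this
            · exact h0
          rw [hmain j, if_neg hj, if_pos ⟨0, hTpos, rfl⟩]
    refine ⟨hset, ?_⟩
    rw [hset]
    exact Set.ncard_pair hne


end
end
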